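/- arXiv:1104.0761 — 12 statements merged into one kernel-verified Lean document; each statement's English description precedes it below -/
import Mathlib

section
/- Let X and Y be integrable real-valued random variables on a probability space. Then E[c(X)] ≤ E[c(Y)] holds for every nondecreasing convex function c: ℝ → ℝ such that c(X) and c(Y) are integrable, if and only if E[(X−K)⁺] ≤ E[(Y−K)⁺] for every K ∈ ℝ. -/
/-!
Calls `x ↦ (x - K)⁺` are themselves nondecreasing and convex, which gives one direction.
Conversely, letting `K → -∞` in the call inequalities gives `E[X] ≤ E[Y]`, so
`E[f(X)] ≤ E[f(Y)]` holds for every nonnegative combination `f = a + b x + ∑ wᵢ (x - Kᵢ)⁺`.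
A maximum of finitely many nondecreasing affine functions is such a combination (add the lines
in order of increasing slope), and the maxima of the supporting lines of a nondecreasing convex
`c` at the first `n` rationals increase to `c`; monotone convergence concludes.
-/

open MeasureTheory Set Filter Topology

/-- `f x = a + b x + ∑ w (x - K)⁺` with `b ≥ 0` and nonnegative weights `w`, where `p ∈ P` is the
call of strike `p.1` and weight `p.2`; `s` bounds the slope `b + ∑ w` of `f` near `+∞`. -/
def IsCallPortfolio (s : ℝ) (f : ℝ → ℝ) : Prop :=
  ∃ (a b : ℝ) (P : Finset (ℝ × ℝ)), 0 ≤ b ∧ (∀ p ∈ P, 0 ≤ p.2) ∧ b + ∑ p ∈ P, p.2 ≤ s ∧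
    ∀ x, f x = a + b * x + ∑ p ∈ P, p.2 * max (x - p.1) 0

lemma isCallPortfolio_affine {A B : ℝ} (hB : 0 ≤ B) : IsCallPortfolio B (fun x => A + B * x) :=
  ⟨A, B, ∅, hB, by simp, by simp, by simp⟩

lemma min_eq_sub_max_sub_zero (x K : ℝ) : min x K = x - max (x - K) 0 := by
  rcases le_total x K with hxK | hKx
  · rw [min_eq_left hxK, max_eq_right (sub_nonpos.2 hxK), sub_zero]
  · rw [min_eq_right hKx, max_eq_left (sub_nonneg.2 hKx)]; ring

lemma max_min_sub_zero_eq {x k K : ℝ} (hk : k < K) :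
    max (min x K - k) 0 = max (x - k) 0 - max (x - K) 0 := by
  rcases le_total x K with hxK | hKx
  · rw [min_eq_left hxK, max_eq_right (sub_nonpos.2 hxK), sub_zero]
  · rw [min_eq_right hKx, max_eq_left (sub_nonneg.2 hKx), max_eq_left (by linarith),
      max_eq_left (by linarith)]
    ring

namespace IsCallPortfolio

variable {s : ℝ} {f : ℝ → ℝ}

lemma mono {t : ℝ} (hf : IsCallPortfolio s f) (hst : s ≤ t) : IsCallPortfolio t f := by
  obtain ⟨a, b, P, hb, hP, hslope, hfx⟩ := hf
  exact ⟨a, b, P, hb, hP, hslope.trans hst, hfx⟩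

lemma congr {g : ℝ → ℝ} (hf : IsCallPortfolio s f) (hfg : ∀ x, f x = g x) :
    IsCallPortfolio s g := by
  obtain ⟨a, b, P, hb, hP, hslope, hfx⟩ := hf
  exact ⟨a, b, P, hb, hP, hslope, fun x => (hfg x).symm.trans (hfx x)⟩

lemma slope_nonneg (hf : IsCallPortfolio s f) : 0 ≤ s := by
  obtain ⟨a, b, P, hb, hP, hslope, -⟩ := hf
  linarith [Finset.sum_nonneg hP]

lemma continuous (hf : IsCallPortfolio s f) : Continuous f := by
  obtain ⟨a, b, P, -, -, -, hfx⟩ := hf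
  rw [funext hfx]
  fun_prop

lemma sub_le_mul_sub (hf : IsCallPortfolio s f) {x y : ℝ} (hxy : x ≤ y) :
    f y - f x ≤ s * (y - x) := by
  obtain ⟨a, b, P, hb, hP, hslope, hfx⟩ := hf
  have hcall : ∀ p ∈ P, p.2 * max (y - p.1) 0 ≤ p.2 * max (x - p.1) 0 + p.2 * (y - x) := by
    intro p hp
    rw [← mul_add]
    exact mul_le_mul_of_nonneg_left
      (max_le (by linarith [le_max_left (x - p.1) 0]) (by linarith [le_max_right (x - p.1) 0]))
      (hP p hp)
  have hsum := Finset.sum_le_sum hcall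
  rw [Finset.sum_add_distrib, ← Finset.sum_mul] at hsum
  rw [hfx, hfx]
  nlinarith

lemma comp_min_add_call (hf : IsCallPortfolio s f) {B : ℝ} (hsB : s ≤ B) (K : ℝ) :
    IsCallPortfolio B (fun x => f (min x K) + B * max (x - K) 0) := by
  classical
  obtain ⟨a, b, P, hb, hP, hslope, hfx⟩ := hf
  set Q := P.filter (fun p => p.1 < K)
  have hQP : ∑ p ∈ Q, p.2 ≤ ∑ p ∈ P, p.2 :=
    Finset.sum_le_sum_of_subset_of_nonneg (Finset.filter_subset _ _) fun p hp _ => hP p hp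
  -- calls with strike `≥ K` vanish at `min x K`; one new call at `K` brings the slope up to `B`
  have hnew : (K, B - b - ∑ p ∈ Q, p.2) ∉ Q := by simp [Q]
  have hfrozen : ∀ x, ∑ p ∈ P, p.2 * max (min x K - p.1) 0 =
      ∑ p ∈ Q, p.2 * (max (x - p.1) 0 - max (x - K) 0) := by
    intro x
    rw [Finset.sum_filter]
    refine Finset.sum_congr rfl fun p _ => ?_
    split_ifs with hp
    · rw [max_min_sub_zero_eq hp]
    · rw [max_eq_right (by linarith [min_le_right x K, not_lt.1 hp]), mul_zero]
  refine ⟨a, b, insert (K, B - b - ∑ p ∈ Q, p.2) Q, hb, ?_, ?_, fun x => ?_⟩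
  · refine Finset.forall_mem_insert _ _ _ |>.2 ⟨by dsimp only; linarith, fun p hp => ?_⟩
    exact hP p (Finset.mem_filter.1 hp).1
  · rw [Finset.sum_insert hnew]
    linarith
  · dsimp only
    rw [Finset.sum_insert hnew, hfx, hfrozen, min_eq_sub_max_sub_zero]
    simp only [mul_sub, Finset.sum_sub_distrib, ← Finset.sum_mul]
    ring

lemma max_affine (hf : IsCallPortfolio s f) {B : ℝ} (hsB : s ≤ B) (A : ℝ) :
    IsCallPortfolio B (fun x => max (A + B * x) (f x)) := by
  -- `f` has slope at most `B`, so the line crosses `f` at most once, from below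
  set ψ := fun x => A + B * x - f x
  have hψ : Monotone ψ := fun x y hxy => by
    have := mul_le_mul_of_nonneg_right hsB (sub_nonneg.2 hxy)
    linarith [hf.sub_le_mul_sub hxy]
  by_cases hbelow : ∀ x, ψ x ≤ 0
  · exact (hf.mono hsB).congr fun x => (max_eq_right (sub_nonpos.1 (hbelow x))).symm
  by_cases habove : ∀ x, 0 ≤ ψ x
  · exact (isCallPortfolio_affine (hf.slope_nonneg.trans hsB)).congr fun x =>
      (max_eq_left (sub_nonneg.1 (habove x))).symm
  push Not at hbelow habove
  obtain ⟨x₁, hx₁⟩ := hbelow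
  obtain ⟨x₀, hx₀⟩ := habove
  obtain ⟨K, hK⟩ : ∃ K, ψ K = 0 :=
    intermediate_value_univ x₀ x₁ (by have := hf.continuous; fun_prop) ⟨hx₀.le, hx₁.le⟩
  refine (hf.comp_min_add_call hsB K).congr fun x => ?_
  rcases le_total x K with hxK | hKx
  · have := hψ hxK
    rw [min_eq_left hxK, max_eq_right (sub_nonpos.2 hxK), mul_zero, add_zero,
      max_eq_right (by linarith)]
  · have := hψ hKx
    rw [min_eq_right hKx, max_eq_left (sub_nonneg.2 hKx), max_eq_left (by linarith)]
    linarith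

end IsCallPortfolio

lemma isCallPortfolio_sup' {ι : Type*} (S : Finset ι) (hS : S.Nonempty) (A B : ι → ℝ) {β : ℝ}
    (hB : ∀ i ∈ S, 0 ≤ B i ∧ B i ≤ β) :
    IsCallPortfolio β (fun x => S.sup' hS fun i => A i + B i * x) := by
  classical
  induction S using Finset.induction_on_max_value B generalizing β with
  | empty => exact absurd hS Finset.not_nonempty_empty
  | insert i S _ hmax ih =>
    obtain ⟨hBi, hBiβ⟩ := hB i (Finset.mem_insert_self i S)
    rcases S.eq_empty_or_nonempty with rfl | hS'
    · exact (isCallPortfolio_affine (A := A i) hBi).mono hBiβ |>.congr fun x => by simp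
    · have hrest := ih hS' fun j hj => ⟨(hB j (Finset.mem_insert_of_mem hj)).1, hmax j hj⟩
      exact (hrest.max_affine le_rfl (A i)).mono hBiβ |>.congr fun x =>
        (Finset.sup'_insert (H := hS') (f := fun j => A j + B j * x)).symm

section Integral

variable {Ω : Type*} [MeasurableSpace Ω] {μ : Measure Ω} {X Y : Ω → ℝ}

lemma IsCallPortfolio.integrable_comp [IsFiniteMeasure μ] {s : ℝ} {f : ℝ → ℝ}
    (hf : IsCallPortfolio s f) (hX : Integrable X μ) : Integrable (fun ω => f (X ω)) μ := by
  obtain ⟨a, b, P, -, -, -, hfx⟩ := hf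
  simp_rw [hfx]
  exact ((integrable_const a).add (hX.const_mul b)).add
    (integrable_finsetSum _ fun p _ => (hX.sub (integrable_const p.1)).pos_part.const_mul p.2)

lemma IsCallPortfolio.integral_comp_le [IsProbabilityMeasure μ] {s : ℝ} {f : ℝ → ℝ}
    (hf : IsCallPortfolio s f) (hX : Integrable X μ) (hY : Integrable Y μ)
    (hmean : ∫ ω, X ω ∂μ ≤ ∫ ω, Y ω ∂μ)
    (hcall : ∀ K, ∫ ω, max (X ω - K) 0 ∂μ ≤ ∫ ω, max (Y ω - K) 0 ∂μ) :
    ∫ ω, f (X ω) ∂μ ≤ ∫ ω, f (Y ω) ∂μ := by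
  obtain ⟨a, b, P, hb, hP, -, hfx⟩ := hf
  have hintegral : ∀ Z : Ω → ℝ, Integrable Z μ → ∫ ω, f (Z ω) ∂μ =
      a + b * ∫ ω, Z ω ∂μ + ∑ p ∈ P, p.2 * ∫ ω, max (Z ω - p.1) 0 ∂μ := by
    intro Z hZ
    have hcalls : ∀ p ∈ P, Integrable (fun ω => p.2 * max (Z ω - p.1) 0) μ :=
      fun p _ => (hZ.sub (integrable_const p.1)).pos_part.const_mul p.2
    have hlinear : Integrable (fun ω => a + b * Z ω) μ := (integrable_const a).add (hZ.const_mul b)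
    simp_rw [hfx]
    rw [integral_add hlinear (integrable_finsetSum _ hcalls),
      integral_add (integrable_const a) (hZ.const_mul b), integral_finsetSum _ hcalls]
    simp [integral_const_mul]
  rw [hintegral X hX, hintegral Y hY]
  gcongr _ + _ * ?_ + ∑ p ∈ P, _ * ?_ with p hp
  · exact hP p hp
  · exact hcall p.1

lemma tendsto_integral_max_sub_zero_atBot (hY : Integrable Y μ) :
    Tendsto (fun K => ∫ ω, max (K - Y ω) 0 ∂μ) atBot (𝓝 0) := by
  have hlim := tendsto_integral_filter_of_dominated_convergence (l := atBot) (μ := μ)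
    (F := fun K ω => max (K - Y ω) 0) (f := fun _ => 0) (fun ω => |Y ω|)
    (Eventually.of_forall fun K => by have := hY.aestronglyMeasurable; fun_prop)
    ((eventually_le_atBot 0).mono fun K hK => ae_of_all _ fun ω => by
      rw [Real.norm_eq_abs, abs_of_nonneg (le_max_right _ _)]
      exact max_le (by linarith [neg_abs_le (Y ω)]) (abs_nonneg _))
    hY.abs
    (ae_of_all _ fun ω => tendsto_const_nhds.congr'
      ((eventually_lt_atBot (Y ω)).mono fun K hK => (max_eq_right (by linarith)).symm))
  simpa using hlim

lemma integral_le_integral_of_integral_max_sub_le [IsProbabilityMeasure μ]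
    (hX : Integrable X μ) (hY : Integrable Y μ)
    (hcall : ∀ K, ∫ ω, max (X ω - K) 0 ∂μ ≤ ∫ ω, max (Y ω - K) 0 ∂μ) :
    ∫ ω, X ω ∂μ ≤ ∫ ω, Y ω ∂μ := by
  have hbound : ∀ K, ∫ ω, X ω ∂μ ≤ ∫ ω, Y ω ∂μ + ∫ ω, max (K - Y ω) 0 ∂μ := by
    intro K
    have hsplit : ∀ ω, max (Y ω - K) 0 = (Y ω - K) + max (K - Y ω) 0 := fun ω => by
      rcases le_total (Y ω) K with h | h
      · rw [max_eq_right (by linarith), max_eq_left (by linarith)]; ring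
      · rw [max_eq_left (by linarith), max_eq_right (by linarith)]; ring
    have hXK : ∫ ω, X ω ∂μ - K ≤ ∫ ω, max (X ω - K) 0 ∂μ := by
      have hXK' : Integrable (fun ω => X ω - K) μ := hX.sub (integrable_const K)
      calc ∫ ω, X ω ∂μ - K = ∫ ω, (X ω - K) ∂μ := by simp [integral_sub hX (integrable_const K)]
        _ ≤ ∫ ω, max (X ω - K) 0 ∂μ := integral_mono hXK' hXK'.pos_part fun ω => le_max_left _ _
    have hYK : ∫ ω, max (Y ω - K) 0 ∂μ = ∫ ω, Y ω ∂μ - K + ∫ ω, max (K - Y ω) 0 ∂μ := by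
      have hYK' : Integrable (fun ω => Y ω - K) μ := hY.sub (integrable_const K)
      have hKY : Integrable (fun ω => max (K - Y ω) 0) μ := ((integrable_const K).sub hY).pos_part
      simp_rw [hsplit]
      rw [integral_add hYK' hKY, integral_sub hY (integrable_const K)]
      simp
    linarith [hcall K]
  simpa using ge_of_tendsto' (tendsto_const_nhds.add (tendsto_integral_max_sub_zero_atBot hY))
    hbound

end Integral

section Convex

variable {c : ℝ → ℝ}

lemma ConvexOn.add_rightDeriv_mul_sub_le (hc : ConvexOn ℝ univ c) (t x : ℝ) :
    c t + derivWithin c (Ioi t) t * (x - t) ≤ c x := by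
  rcases lt_trichotomy x t with hxt | rfl | htx
  · have hslope := (hc.slope_le_leftDeriv_of_mem_interior (mem_univ x) (by simp) hxt).trans
      (hc.leftDeriv_le_rightDeriv_of_mem_interior (by simp))
    rw [slope_def_field, div_le_iff₀ (sub_pos.2 hxt)] at hslope
    linarith
  · simp
  · have hslope := hc.rightDeriv_le_slope_of_mem_interior (by simp) (mem_univ x) htx
    rw [slope_def_field, le_div_iff₀ (sub_pos.2 htx)] at hslope
    linarith

lemma ConvexOn.exists_rat_lt_add_rightDeriv_mul_sub (hc : ConvexOn ℝ univ c) (hmono : Monotone c)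
    {x b : ℝ} (hb : b < c x) :
    ∃ q : ℚ, b < c q + derivWithin c (Ioi (q : ℝ)) q * (x - q) := by
  set M := c (x + 2) - c x
  have hM : 0 ≤ M := sub_nonneg.2 (hmono (by linarith))
  obtain ⟨q, hxq, hqx⟩ := exists_rat_btwn
    (lt_add_of_pos_right x (lt_min one_pos (div_pos (sub_pos.2 hb) (by linarith : 0 < M + 1))))
  refine ⟨q, ?_⟩
  have hq1 : (q : ℝ) < x + 1 := hqx.trans_le (by linarith [min_le_left 1 ((c x - b) / (M + 1))])
  have hqδ : (M + 1) * (q - x) < c x - b := by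
    rw [← lt_div_iff₀' (by linarith)]
    linarith [min_le_right 1 ((c x - b) / (M + 1))]
  -- the slope of `c` at `q` is at most its slope over `[q, q + 1] ⊆ [x, x + 2]`
  have hd : derivWithin c (Ioi (q : ℝ)) q ≤ M := by
    have hslope := hc.rightDeriv_le_slope_of_mem_interior (by simp) (mem_univ ((q : ℝ) + 1))
      (lt_add_one (q : ℝ))
    rw [slope_def_field, add_sub_cancel_left, div_one] at hslope
    linarith [hmono hxq.le, hmono (by linarith : (q : ℝ) + 1 ≤ x + 2)]
  nlinarith [mul_le_mul_of_nonneg_right hd (sub_nonneg.2 hxq.le), hmono hxq.le]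

lemma ConvexOn.exists_isCallPortfolio_tendsto (hc : ConvexOn ℝ univ c) (hmono : Monotone c) :
    ∃ g : ℕ → ℝ → ℝ, (∀ n, ∃ s, IsCallPortfolio s (g n)) ∧ (∀ x, Monotone fun n => g n x) ∧
      ∀ x, Tendsto (fun n => g n x) atTop (𝓝 (c x)) := by
  obtain ⟨e, he⟩ := exists_surjective_nat ℚ
  set B : ℕ → ℝ := fun i => derivWithin c (Ioi (e i : ℝ)) (e i)
  set A : ℕ → ℝ := fun i => c (e i) - B i * e i
  have hline : ∀ i x, A i + B i * x = c (e i) + B i * (x - e i) := fun i x => by ring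
  set g : ℕ → ℝ → ℝ := fun n x =>
    (Finset.range (n + 1)).sup' Finset.nonempty_range_add_one fun i => A i + B i * x
  have hg : ∀ n, IsCallPortfolio ((Finset.range (n + 1)).sup' Finset.nonempty_range_add_one B)
      (g n) := fun n => isCallPortfolio_sup' _ _ A B fun i hi =>
    ⟨(hmono.monotoneOn _).derivWithin_nonneg, Finset.le_sup' B hi⟩
  refine ⟨g, fun n => ⟨_, hg n⟩, fun x n m hnm => ?_,
    fun x => tendsto_order.2 ⟨fun b hb => ?_, fun b hb => ?_⟩⟩
  · exact Finset.sup'_mono _ (Finset.range_subset_range.2 (by omega)) _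
  · obtain ⟨q, hq⟩ := hc.exists_rat_lt_add_rightDeriv_mul_sub hmono hb
    obtain ⟨i, rfl⟩ := he q
    filter_upwards [eventually_ge_atTop i] with n hn
    exact hq.trans_le ((hline i x).symm.trans_le
      (Finset.le_sup' (fun j => A j + B j * x) (Finset.mem_range.2 (by omega))))
  · exact Eventually.of_forall fun n => (Finset.sup'_le _ _ fun i _ =>
      (hline i x).trans_le (hc.add_rightDeriv_mul_sub_le _ x)).trans_lt hb

end Convex

theorem integral_comp_le_of_integral_max_sub_le {Ω : Type*} [MeasurableSpace Ω] {μ : Measure Ω}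
    [IsProbabilityMeasure μ] {X Y : Ω → ℝ} (hX : Integrable X μ) (hY : Integrable Y μ)
    (hcall : ∀ K, ∫ ω, max (X ω - K) 0 ∂μ ≤ ∫ ω, max (Y ω - K) 0 ∂μ) {c : ℝ → ℝ}
    (hmono : Monotone c) (hc : ConvexOn ℝ univ c)
    (hcX : Integrable (fun ω => c (X ω)) μ) (hcY : Integrable (fun ω => c (Y ω)) μ) :
    ∫ ω, c (X ω) ∂μ ≤ ∫ ω, c (Y ω) ∂μ := by
  have hmean := integral_le_integral_of_integral_max_sub_le hX hY hcall
  obtain ⟨g, hg, hg_mono, hg_lim⟩ := hc.exists_isCallPortfolio_tendsto hmono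
  choose s hs using hg
  have hlim : ∀ {Z : Ω → ℝ}, Integrable Z μ → Integrable (fun ω => c (Z ω)) μ →
      Tendsto (fun n => ∫ ω, g n (Z ω) ∂μ) atTop (𝓝 (∫ ω, c (Z ω) ∂μ)) := fun hZ hcZ =>
    integral_tendsto_of_tendsto_of_monotone (fun n => (hs n).integrable_comp hZ) hcZ
      (ae_of_all _ fun ω => hg_mono _) (ae_of_all _ fun ω => hg_lim _)
  exact le_of_tendsto_of_tendsto' (hlim hX hcX) (hlim hY hcY) fun n =>
    (hs n).integral_comp_le hX hY hmean hcall

/-- **Call characterization of the monotone convex order.**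
For integrable real random variables `X, Y` on a probability space,
`E[c(X)] ≤ E[c(Y)]` for every nondecreasing convex `c : ℝ → ℝ` with `c ∘ X`, `c ∘ Y`
integrable, if and only if `E[(X - K)⁺] ≤ E[(Y - K)⁺]` for every `K ∈ ℝ`. -/
theorem monotone_convex_order_iff_calls
    {Ω : Type*} [MeasureSpace Ω] [IsProbabilityMeasure (volume : Measure Ω)]
    (X Y : Ω → ℝ) (hX : Integrable X) (hY : Integrable Y) :
    (∀ c : ℝ → ℝ, Monotone c → ConvexOn ℝ univ c →
        Integrable (fun ω => c (X ω)) → Integrable (fun ω => c (Y ω)) →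
        ∫ ω, c (X ω) ≤ ∫ ω, c (Y ω)) ↔
      (∀ K : ℝ, ∫ ω, max (X ω - K) 0 ≤ ∫ ω, max (Y ω - K) 0) := by
  refine ⟨fun h K => ?_, fun hcall c hmono hc hcX hcY =>
    integral_comp_le_of_integral_max_sub_le hX hY hcall hmono hc hcX hcY⟩
  have hmono : Monotone fun x : ℝ => max (x - K) 0 := fun x y hxy =>
    max_le_max (sub_le_sub_right hxy K) le_rfl
  have hconv : ConvexOn ℝ univ fun x : ℝ => max (x - K) 0 :=
    ((convexOn_id convex_univ).sub (concaveOn_const K convex_univ)).sup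
      (convexOn_const 0 convex_univ)
  exact h _ hmono hconv (hX.sub (integrable_const K)).pos_part
    (hY.sub (integrable_const K)).pos_part
end

section
/- Let X and Y be integrable real-valued random variables on a probability space. Then E[c(X)] ≤ E[c(Y)] holds for every convex function c: ℝ → ℝ such that c(X) and c(Y) are integrable, if and only if E[X] = E[Y] and E[(X−K)⁺] ≤ E[(Y−K)⁺] for every K ∈ ℝ. -/
/-!
A convex function `c` is the increasing limit of the maxima of its supporting lines over finer and
finer dyadic grids. When the supporting lines at `q₀ < ⋯ < qₖ` are added one at a time from left to
right, the line at `qⱼ₊₁` can only exceed the current maximum where it exceeds the line at `qⱼ`, so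
each step adds the positive part of an affine function of nonnegative slope: a nonnegative multiple
of a call payoff `(x - K)⁺`, or a constant. Equal means and ordered call prices therefore order the
expectations of each approximant, and monotone convergence carries the inequality over to `c`.
-/

open MeasureTheory Set Filter Topology

noncomputable section

/-- For convex `c : ℝ → ℝ` the right derivative `derivWithin c (Ioi q) q` exists everywhere, so this
is a genuine supporting line at `q`. -/
def supportLine (c : ℝ → ℝ) (q x : ℝ) : ℝ := c q + derivWithin c (Ioi q) q * (x - q)

def dyadicGrid (n : ℕ) : Finset ℝ :=
  (Finset.Icc (-4 ^ n : ℤ) (4 ^ n)).image fun j : ℤ => (j : ℝ) / 2 ^ n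

lemma dyadicGrid_nonempty (n : ℕ) : (dyadicGrid n).Nonempty := by
  simp [dyadicGrid]

def supportApprox (c : ℝ → ℝ) (n : ℕ) (x : ℝ) : ℝ :=
  (dyadicGrid n).sup' (dyadicGrid_nonempty n) (supportLine c · x)

end

namespace ConvexOn

variable {c : ℝ → ℝ} (hc : ConvexOn ℝ univ c)
include hc

lemma monotone_rightDeriv : Monotone fun x => derivWithin c (Ioi x) x := by
  simpa using hc.monotoneOn_rightDeriv

lemma supportLine_le (q x : ℝ) : supportLine c q x ≤ c x := by
  rcases lt_trichotomy q x with hqx | rfl | hxq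
  · have h := hc.rightDeriv_le_slope_of_mem_interior (by simp) (mem_univ x) hqx
    rw [slope_def_field, le_div_iff₀ (sub_pos.2 hqx)] at h
    rw [supportLine]
    linarith
  · simp [supportLine]
  · have h := (hc.slope_le_leftDeriv_of_mem_interior (mem_univ x) (by simp) hxq).trans
      (hc.leftDeriv_le_rightDeriv_of_mem_interior (by simp))
    rw [slope_def_field, div_le_iff₀ (sub_pos.2 hxq)] at h
    rw [supportLine]
    linarith

lemma supportLine_le_supportLine {q b x : ℝ} (h : q ≤ b ∧ b ≤ x ∨ x ≤ b ∧ b ≤ q) :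
    supportLine c q x ≤ supportLine c b x := by
  have hb := hc.supportLine_le q b
  simp only [supportLine] at hb ⊢
  rcases h with ⟨hqb, hbx⟩ | ⟨hxb, hbq⟩
  · nlinarith [hc.monotone_rightDeriv hqb]
  · nlinarith [hc.monotone_rightDeriv hbq]

lemma sub_supportLine_le (q x : ℝ) :
    c x - supportLine c q x ≤
      (derivWithin c (Ioi x) x - derivWithin c (Ioi q) q) * (x - q) := by
  have h := hc.supportLine_le x q
  simp only [supportLine] at h ⊢
  linarith

lemma sup'_insert_supportLine {s : Finset ℝ} (hs : s.Nonempty) {a : ℝ} (ha : ∀ q ∈ s, q ≤ a)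
    (x : ℝ) :
    (insert a s).sup' (Finset.insert_nonempty a s) (supportLine c · x) =
      s.sup' hs (supportLine c · x) +
        max (supportLine c a x - supportLine c (s.max' hs) x) 0 := by
  set b := s.max' hs
  have hbs : b ∈ s := s.max'_mem hs
  have hℓb : supportLine c b x ≤ s.sup' hs (supportLine c · x) := s.le_sup' (supportLine c · x) hbs
  rw [Finset.sup'_insert hs]
  rcases le_total x b with hxb | hbx
  · have hab : supportLine c a x ≤ supportLine c b x :=
      hc.supportLine_le_supportLine (Or.inr ⟨hxb, ha b hbs⟩)
    rw [sup_eq_right.2 (hab.trans hℓb), max_eq_right (by linarith), add_zero]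
  · have hsup : s.sup' hs (supportLine c · x) = supportLine c b x :=
      le_antisymm (s.sup'_le hs _ fun q hq =>
        hc.supportLine_le_supportLine (Or.inl ⟨s.le_max' q hq, hbx⟩)) hℓb
    rw [hsup, max_def, max_def]
    split_ifs <;> linarith

lemma tendsto_sup'_supportLine {s : ℕ → Finset ℝ} (hs : ∀ n, (s n).Nonempty) {ε : ℕ → ℝ}
    (hε : Tendsto ε atTop (𝓝 0)) {x : ℝ} (hx : ∀ᶠ n in atTop, ∃ q ∈ s n, q ≤ x ∧ x - q ≤ ε n) :
    Tendsto (fun n => (s n).sup' (hs n) (supportLine c · x)) atTop (𝓝 (c x)) := by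
  set C := derivWithin c (Ioi x) x - derivWithin c (Ioi (x - 1)) (x - 1)
  have hlower : Tendsto (fun n => c x - C * ε n) atTop (𝓝 (c x)) := by
    simpa using tendsto_const_nhds.sub (hε.const_mul C)
  refine tendsto_of_tendsto_of_tendsto_of_le_of_le' hlower tendsto_const_nhds ?_
    (Eventually.of_forall fun n => (s n).sup'_le _ _ fun q _ => hc.supportLine_le q x)
  filter_upwards [hx, hε.eventually (ge_mem_nhds one_pos)] with n ⟨q, hqs, hqx, hxq⟩ hε1
  have hdq : derivWithin c (Ioi (x - 1)) (x - 1) ≤ derivWithin c (Ioi q) q :=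
    hc.monotone_rightDeriv (by linarith)
  have hdx : derivWithin c (Ioi q) q ≤ derivWithin c (Ioi x) x := hc.monotone_rightDeriv hqx
  calc c x - C * ε n
      ≤ c x - (derivWithin c (Ioi x) x - derivWithin c (Ioi q) q) * (x - q) := by
        gcongr
        · linarith
        · linarith
    _ ≤ supportLine c q x := by linarith [hc.sub_supportLine_le q x]
    _ ≤ (s n).sup' (hs n) (supportLine c · x) := (s n).le_sup' (supportLine c · x) hqs

end ConvexOn

lemma monotone_dyadicGrid : Monotone dyadicGrid := by
  refine monotone_nat_of_le_succ fun n q hq => ?_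
  obtain ⟨j, hj, rfl⟩ := Finset.mem_image.1 hq
  rw [Finset.mem_Icc] at hj
  refine Finset.mem_image.2 ⟨2 * j, Finset.mem_Icc.2 ⟨by omega, by omega⟩, ?_⟩
  push_cast
  rw [pow_succ]
  field_simp

lemma eventually_exists_mem_dyadicGrid (x : ℝ) :
    ∀ᶠ n in atTop, ∃ q ∈ dyadicGrid n, q ≤ x ∧ x - q ≤ 2⁻¹ ^ n := by
  filter_upwards [(tendsto_pow_atTop_atTop_of_one_lt one_lt_two).eventually_ge_atTop (|x| + 1)]
    with n hn
  have h2n : (0 : ℝ) < 2 ^ n := by positivity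
  have h4n : (4 : ℝ) ^ n = 2 ^ n * 2 ^ n := by rw [← mul_pow]; norm_num
  have hj := Int.floor_le (x * 2 ^ n)
  have hj' := Int.lt_floor_add_one (x * 2 ^ n)
  have habs : |x * 2 ^ n| ≤ (2 ^ n - 1) * 2 ^ n := by
    rw [abs_mul, abs_of_pos h2n]
    gcongr
    linarith
  obtain ⟨hlo, hhi⟩ := abs_le.1 habs
  refine ⟨⌊x * 2 ^ n⌋ / 2 ^ n, Finset.mem_image.2 ⟨⌊x * 2 ^ n⌋, Finset.mem_Icc.2 ⟨?_, ?_⟩, rfl⟩,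
    ?_, ?_⟩
  · exact_mod_cast (show -(4 : ℝ) ^ n ≤ ⌊x * 2 ^ n⌋ by linarith [abs_nonneg x])
  · exact_mod_cast (show (⌊x * 2 ^ n⌋ : ℝ) ≤ 4 ^ n by linarith)
  · rwa [div_le_iff₀ h2n]
  · rw [inv_pow, sub_le_iff_le_add, ← one_div, ← add_div, le_div_iff₀ h2n]
    linarith

lemma monotone_supportApprox (c : ℝ → ℝ) (x : ℝ) : Monotone fun n => supportApprox c n x :=
  fun _ _ hnm => Finset.sup'_mono _ (monotone_dyadicGrid hnm) _

lemma ConvexOn.tendsto_supportApprox {c : ℝ → ℝ} (hc : ConvexOn ℝ univ c) (x : ℝ) :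
    Tendsto (fun n => supportApprox c n x) atTop (𝓝 (c x)) :=
  hc.tendsto_sup'_supportLine dyadicGrid_nonempty
    (tendsto_pow_atTop_nhds_zero_of_lt_one (by norm_num) (by norm_num))
    (eventually_exists_mem_dyadicGrid x)

section Integral

variable {Ω : Type*} [MeasurableSpace Ω]

def IntegralCompLE (μ : Measure Ω) (X Y : Ω → ℝ) (g : ℝ → ℝ) : Prop :=
  Integrable (fun ω => g (X ω)) μ ∧ Integrable (fun ω => g (Y ω)) μ ∧
    ∫ ω, g (X ω) ∂μ ≤ ∫ ω, g (Y ω) ∂μ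

variable {μ : Measure Ω} {X Y : Ω → ℝ}

lemma IntegralCompLE.add {f g : ℝ → ℝ} (hf : IntegralCompLE μ X Y f)
    (hg : IntegralCompLE μ X Y g) : IntegralCompLE μ X Y (f + g) := by
  obtain ⟨hfX, hfY, hf⟩ := hf
  obtain ⟨hgX, hgY, hg⟩ := hg
  refine ⟨hfX.add hgX, hfY.add hgY, ?_⟩
  simp only [Pi.add_apply]
  rw [integral_add hfX hgX, integral_add hfY hgY]
  exact add_le_add hf hg

variable [IsFiniteMeasure μ] (hX : Integrable X μ) (hY : Integrable Y μ)
include hX hY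

lemma integralCompLE_affine (hmean : ∫ ω, X ω ∂μ = ∫ ω, Y ω ∂μ) (α β : ℝ) :
    IntegralCompLE μ X Y fun x => α * x + β := by
  refine ⟨(hX.const_mul α).add (integrable_const β), (hY.const_mul α).add (integrable_const β),
    le_of_eq ?_⟩
  rw [integral_add (hX.const_mul α) (integrable_const β),
    integral_add (hY.const_mul α) (integrable_const β), integral_const_mul, integral_const_mul,
    hmean]

lemma integralCompLE_posPart_affine
    (hcall : ∀ K : ℝ, ∫ ω, max (X ω - K) 0 ∂μ ≤ ∫ ω, max (Y ω - K) 0 ∂μ)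
    {α : ℝ} (hα : 0 ≤ α) (β : ℝ) : IntegralCompLE μ X Y fun x => max (α * x + β) 0 := by
  rcases hα.eq_or_lt with rfl | hα
  · simp [IntegralCompLE]
  have hcall_eq : (fun x => max (α * x + β) 0) = fun x => α * max (x - -β / α) 0 := by
    funext x
    rw [mul_max_of_nonneg _ _ hα.le, mul_zero, mul_sub, mul_div_cancel₀ _ hα.ne']
    ring_nf
  rw [hcall_eq]
  refine ⟨((hX.sub (integrable_const _)).pos_part).const_mul α,
    ((hY.sub (integrable_const _)).pos_part).const_mul α, ?_⟩
  rw [integral_const_mul, integral_const_mul]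
  exact mul_le_mul_of_nonneg_left (hcall _) hα.le

lemma ConvexOn.integralCompLE_sup'_supportLine {c : ℝ → ℝ} (hc : ConvexOn ℝ univ c)
    (hmean : ∫ ω, X ω ∂μ = ∫ ω, Y ω ∂μ)
    (hcall : ∀ K : ℝ, ∫ ω, max (X ω - K) 0 ∂μ ≤ ∫ ω, max (Y ω - K) 0 ∂μ)
    (s : Finset ℝ) (hs : s.Nonempty) :
    IntegralCompLE μ X Y fun x => s.sup' hs (supportLine c · x) := by
  induction s using Finset.induction_on_max with
  | empty => exact absurd hs Finset.not_nonempty_empty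
  | insert a s ha ih =>
    set d := fun q => derivWithin c (Ioi q) q
    rcases s.eq_empty_or_nonempty with rfl | hs'
    · convert integralCompLE_affine hX hY hmean (d a) (c a - d a * a) using 2 with x
      simp only [insert_empty_eq, Finset.sup'_singleton, supportLine, d]
      ring
    set b := s.max' hs'
    have hba : b ≤ a := (ha b (s.max'_mem hs')).le
    have hsplit : (fun x => (insert a s).sup' hs (supportLine c · x)) =
        (fun x => s.sup' hs' (supportLine c · x)) +
          fun x => max ((d a - d b) * x + (c a - d a * a - (c b - d b * b))) 0 := by
      funext x
      rw [Pi.add_apply, hc.sup'_insert_supportLine hs' (fun q hq => (ha q hq).le)]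
      congr 2
      simp only [supportLine, d, b]
      ring
    rw [hsplit]
    exact (ih hs').add
      (integralCompLE_posPart_affine hX hY hcall (sub_nonneg.2 (hc.monotone_rightDeriv hba)) _)

theorem ConvexOn.integral_comp_le_of_integral_posPart_le {c : ℝ → ℝ} (hc : ConvexOn ℝ univ c)
    (hmean : ∫ ω, X ω ∂μ = ∫ ω, Y ω ∂μ)
    (hcall : ∀ K : ℝ, ∫ ω, max (X ω - K) 0 ∂μ ≤ ∫ ω, max (Y ω - K) 0 ∂μ)
    (hcX : Integrable (fun ω => c (X ω)) μ) (hcY : Integrable (fun ω => c (Y ω)) μ) :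
    ∫ ω, c (X ω) ∂μ ≤ ∫ ω, c (Y ω) ∂μ := by
  have happrox (n : ℕ) : IntegralCompLE μ X Y (supportApprox c n) :=
    hc.integralCompLE_sup'_supportLine hX hY hmean hcall (dyadicGrid n) (dyadicGrid_nonempty n)
  have hlim {Z : Ω → ℝ} (hZ : ∀ n, Integrable (fun ω => supportApprox c n (Z ω)) μ)
      (hcZ : Integrable (fun ω => c (Z ω)) μ) :
      Tendsto (fun n => ∫ ω, supportApprox c n (Z ω) ∂μ) atTop (𝓝 (∫ ω, c (Z ω) ∂μ)) :=
    integral_tendsto_of_tendsto_of_monotone hZ hcZ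
      (ae_of_all _ fun ω => monotone_supportApprox c (Z ω))
      (ae_of_all _ fun ω => hc.tendsto_supportApprox (Z ω))
  exact le_of_tendsto_of_tendsto' (hlim (fun n => (happrox n).1) hcX)
    (hlim (fun n => (happrox n).2.1) hcY) fun n => (happrox n).2.2

end Integral

/-- **Call characterization of the convex order.**
For integrable real random variables `X, Y` on a probability space,
`E[c(X)] ≤ E[c(Y)]` for every convex `c : ℝ → ℝ` with `c ∘ X`, `c ∘ Y` integrable,
if and only if `E[X] = E[Y]` and `E[(X - K)⁺] ≤ E[(Y - K)⁺]` for every `K ∈ ℝ`. -/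
theorem convex_order_iff_calls_and_means
    {Ω : Type*} [MeasureSpace Ω] [IsProbabilityMeasure (volume : Measure Ω)]
    (X Y : Ω → ℝ) (hX : Integrable X) (hY : Integrable Y) :
    (∀ c : ℝ → ℝ, ConvexOn ℝ univ c →
        Integrable (fun ω => c (X ω)) → Integrable (fun ω => c (Y ω)) →
        ∫ ω, c (X ω) ≤ ∫ ω, c (Y ω)) ↔
      ((∫ ω, X ω) = ∫ ω, Y ω ∧
        ∀ K : ℝ, ∫ ω, max (X ω - K) 0 ≤ ∫ ω, max (Y ω - K) 0) := by
  refine ⟨fun h => ⟨?_, fun K => ?_⟩, fun ⟨hmean, hcall⟩ c hc hcX hcY =>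
    hc.integral_comp_le_of_integral_posPart_le hX hY hmean hcall hcX hcY⟩
  · have hneg := h (fun x => -x) (concaveOn_id convex_univ).neg hX.neg hY.neg
    rw [integral_neg, integral_neg, neg_le_neg_iff] at hneg
    exact le_antisymm (h id (convexOn_id convex_univ) hX hY) hneg
  · have hcall_convex : ConvexOn ℝ univ fun x : ℝ => max (x - K) 0 :=
      ((convexOn_id convex_univ).sub (concaveOn_const K convex_univ)).sup
        (convexOn_const 0 convex_univ)
    exact h _ hcall_convex (hX.sub (integrable_const K)).pos_part
      (hY.sub (integrable_const K)).pos_part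
end

section
/- Let (Ω, F, P) be a probability space, let D be an a.s. strictly positive integrable random variable with E[D] = 1, and let U_M, U_L be utility functions on (0,∞) such that U_M is more risk averse than U_L, i.e. −U_M''(x)/U_M'(x) ≥ −U_L''(x)/U_L'(x) for all x > 0. Let X_M and X_L be a.s. strictly positive integrable random variables satisfying the first-order conditions U_M'(X_M) = D and U_L'(X_L) = D almost surely, and suppose D·X_M and D·X_L are integrable with E[D·X_M] = E[D·X_L] (equal budgets). Then E[X_M] ≤ E[X_L] and E[(X_M−K)⁺] ≤ E[(X_L−K)⁺] for every K ∈ ℝ; that is, X_M ≤_MC X_L. -/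
/-!
The marginal utilities `U_M'` and `U_L'` cross at most once, since `U_L' / U_M'` is increasing:
its logarithmic derivative is the difference of the two risk aversions. If they cross at `c`,
inverting the first-order conditions gives `X_L ≤ X_M` where `X_M ≤ c` and `X_M ≤ X_L` where
`X_M > c`, while `D = U_M'(X_M)` lies above `d := U_M'(c)` exactly where `X_M ≤ c`. Hence
`d (X_M - X_L) ≤ D (X_M - X_L)`, and integrating against the equal budgets gives
`E[X_M] ≤ E[X_L]`. The same weighting bounds the difference of calls with strike `K < c`, and for
`K ≥ c` the call payoffs are ordered pointwise. If the marginal utilities never cross, one payoff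
dominates the other and the equal budgets force `X_M = X_L` almost surely.
-/

open MeasureTheory Set Filter

theorem IsPreconnected.exists_eq_or_forall_lt_or_forall_gt {X α : Type*} [TopologicalSpace X]
    [LinearOrder α] [TopologicalSpace α] [OrderClosedTopology α] {s : Set X}
    (hs : IsPreconnected s) {f g : X → α} (hf : ContinuousOn f s) (hg : ContinuousOn g s) :
    (∃ x ∈ s, f x = g x) ∨ (∀ x ∈ s, f x < g x) ∨ ∀ x ∈ s, g x < f x := by
  by_contra! ⟨hne, ⟨a, ha, hga⟩, ⟨b, hb, hfb⟩⟩
  obtain ⟨x, hx, hfgx⟩ := hs.intermediate_value₂ hb ha hf hg hfb hga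
  exact hne x hx hfgx

lemma strictAntiOn_Ioi_of_hasDerivAt_neg {f f' : ℝ → ℝ} {a : ℝ}
    (hf : ∀ x > a, HasDerivAt f (f' x) x) (hf' : ∀ x > a, f' x < 0) :
    StrictAntiOn f (Ioi a) :=
  strictAntiOn_of_hasDerivWithinAt_neg (convex_Ioi a)
    (fun x hx => (hf x hx).continuousAt.continuousWithinAt)
    (by rw [interior_Ioi]; exact fun x hx => (hf x hx).hasDerivWithinAt)
    (by rw [interior_Ioi]; exact hf')

lemma monotoneOn_div_of_riskAversion_le {f f' g g' : ℝ → ℝ} {a : ℝ}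
    (hf : ∀ x > a, HasDerivAt f (f' x) x) (hg : ∀ x > a, HasDerivAt g (g' x) x)
    (hf_pos : ∀ x > a, 0 < f x) (hg_pos : ∀ x > a, 0 < g x)
    (hfg : ∀ x > a, -g' x / g x ≤ -f' x / f x) :
    MonotoneOn (fun x => g x / f x) (Ioi a) := by
  have hderiv : ∀ x > a, HasDerivAt (fun x => g x / f x)
      ((g' x * f x - g x * f' x) / f x ^ 2) x := fun x hx =>
    (hg x hx).div (hf x hx) (hf_pos x hx).ne'
  refine monotoneOn_of_hasDerivWithinAt_nonneg (convex_Ioi a)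
    (fun x hx => (hderiv x hx).continuousAt.continuousWithinAt)
    (by rw [interior_Ioi]; exact fun x hx => (hderiv x hx).hasDerivWithinAt) ?_
  rw [interior_Ioi]
  intro x hx
  have key := hfg x hx
  rw [div_le_div_iff₀ (hg_pos x hx) (hf_pos x hx)] at key
  exact div_nonneg (by linarith) (sq_nonneg _)

section Crossing

variable {f g : ℝ → ℝ} {c x y z : ℝ}

lemma le_of_monotoneOn_div_of_le_crossing (hr : MonotoneOn (fun x => g x / f x) (Ioi 0))
    (hfc : 0 < f c) (hcross : f c = g c) (hz : 0 < z) (hfz : 0 < f z) (hzc : z ≤ c) :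
    g z ≤ f z := by
  have : g z / f z ≤ g c / f c := hr hz (hz.trans_le hzc) hzc
  rwa [← hcross, div_self hfc.ne', div_le_one hfz] at this

lemma le_of_monotoneOn_div_of_crossing_le (hr : MonotoneOn (fun x => g x / f x) (Ioi 0))
    (hc : 0 < c) (hfc : 0 < f c) (hcross : f c = g c) (hfz : 0 < f z) (hcz : c ≤ z) :
    f z ≤ g z := by
  have : g c / f c ≤ g z / f z := hr hc (hc.trans_le hcz) hcz
  rwa [← hcross, div_self hfc.ne', one_le_div hfz] at this

lemma le_of_apply_eq_of_le_crossing (hf : StrictAntiOn f (Ioi 0)) (hg : StrictAntiOn g (Ioi 0))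
    (hc : 0 < c) (hx : 0 < x) (hy : 0 < y) (hle : ∀ z ∈ Ioc 0 c, g z ≤ f z)
    (hxy : f x = g y) (hxc : x ≤ c) : y ≤ x := by
  have hyc : y ≤ c := by
    rw [← hg.le_iff_ge hc hy, ← hxy]
    exact (hle c ⟨hc, le_rfl⟩).trans (hf.antitoneOn hx hc hxc)
  rw [← hf.le_iff_ge hx hy, hxy]
  exact hle y ⟨hy, hyc⟩

lemma le_of_apply_eq_of_crossing_lt (hf : StrictAntiOn f (Ioi 0)) (hg : StrictAntiOn g (Ioi 0))
    (hc : 0 < c) (hx : 0 < x) (hy : 0 < y) (hge : ∀ z, c ≤ z → f z ≤ g z)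
    (hxy : f x = g y) (hcx : c < x) : x ≤ y := by
  have hcy : c < y := by
    rw [← hg.lt_iff_gt hy hc, ← hxy]
    exact (hf hc hx hcx).trans_le (hge c le_rfl)
  rw [← hf.le_iff_ge hy hx, hxy]
  exact hge y hcy.le

lemma mul_sub_le_mul_sub_of_crossing (hf : AntitoneOn f (Ioi 0)) (hc : 0 < c) (hx : 0 < x)
    (hlow : x ≤ c → y ≤ x) (hhigh : c < x → x ≤ y) : f c * (x - y) ≤ f x * (x - y) := by
  rcases le_or_gt x c with hxc | hcx
  · exact mul_le_mul_of_nonneg_right (hf hx hc hxc) (sub_nonneg.2 (hlow hxc))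
  · exact mul_le_mul_of_nonpos_right (hf hc hx hcx.le) (sub_nonpos.2 (hhigh hcx))

end Crossing

lemma max_sub_le_max_sub_of_crossing {x y c K : ℝ} (hhigh : c < x → x ≤ y) (hK : c ≤ K) :
    max (x - K) 0 ≤ max (y - K) 0 := by
  rcases le_or_gt x K with hxK | hKx
  · exact max_le (by linarith [le_max_right (y - K) 0]) (le_max_right _ _)
  · exact max_le_max (by linarith [hhigh (hK.trans_lt hKx)]) le_rfl

lemma mul_max_sub_sub_le_of_crossing {x y c d D K : ℝ} (hd : 0 ≤ d) (hlow : x ≤ c → y ≤ x)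
    (hhigh : c < x → x ≤ y) (hweight : d * (x - y) ≤ D * (x - y)) (hK : K < c) :
    d * (max (x - K) 0 - max (y - K) 0) ≤ D * x - D * y := by
  rw [← mul_sub]
  refine le_trans ?_ hweight
  rcases le_or_gt x c with hxc | hcx
  · refine mul_le_mul_of_nonneg_left ?_ hd
    have hyx := hlow hxc
    simp only [max_def]
    split_ifs <;> linarith
  · have hxy := hhigh hcx
    rw [max_eq_left (by linarith), max_eq_left (by linarith), sub_sub_sub_cancel_right]

section Integral

variable {Ω : Type*} [MeasurableSpace Ω] {μ : Measure Ω}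

lemma integral_le_integral_of_const_mul_sub_le {F G P Q : Ω → ℝ} {d : ℝ} (hd : 0 < d)
    (hF : Integrable F μ) (hG : Integrable G μ) (hP : Integrable P μ) (hQ : Integrable Q μ)
    (hPQ : ∫ ω, P ω ∂μ = ∫ ω, Q ω ∂μ) (h : ∀ᵐ ω ∂μ, d * (F ω - G ω) ≤ P ω - Q ω) :
    ∫ ω, F ω ∂μ ≤ ∫ ω, G ω ∂μ := by
  have key : ∫ ω, d * (F ω - G ω) ∂μ ≤ ∫ ω, P ω - Q ω ∂μ :=
    integral_mono_ae ((hF.sub hG).const_mul d) (hP.sub hQ) h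
  rw [integral_const_mul, integral_sub hF hG, integral_sub hP hQ, hPQ, sub_self] at key
  linarith [nonpos_of_mul_nonpos_right key hd]

lemma ae_eq_of_ae_le_of_integral_mul_eq {X Y D : Ω → ℝ} (hD : ∀ᵐ ω ∂μ, 0 < D ω)
    (hDX : Integrable (fun ω => D ω * X ω) μ) (hDY : Integrable (fun ω => D ω * Y ω) μ)
    (hXY : ∫ ω, D ω * X ω ∂μ = ∫ ω, D ω * Y ω ∂μ) (hle : ∀ᵐ ω ∂μ, Y ω ≤ X ω) : X =ᵐ[μ] Y := by
  have hnonneg : 0 ≤ᵐ[μ] fun ω => D ω * X ω - D ω * Y ω := by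
    filter_upwards [hD, hle] with ω hDω hω
    exact sub_nonneg.2 (mul_le_mul_of_nonneg_left hω hDω.le)
  have hzero := (integral_eq_zero_iff_of_nonneg_ae hnonneg (hDX.sub hDY)).1
    (by rw [integral_sub hDX hDY, hXY, sub_self])
  filter_upwards [hzero, hD] with ω hω hDω
  rw [Pi.zero_apply, ← mul_sub, mul_eq_zero] at hω
  exact sub_eq_zero.1 (hω.resolve_left hDω.ne')

def MonotoneConvexLE (μ : Measure Ω) (X Y : Ω → ℝ) : Prop :=
  ∀ K : ℝ, ∫ ω, max (X ω - K) 0 ∂μ ≤ ∫ ω, max (Y ω - K) 0 ∂μ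

lemma integral_le_and_monotoneConvexLE_of_ae_eq {X Y : Ω → ℝ} (h : X =ᵐ[μ] Y) :
    ∫ ω, X ω ∂μ ≤ ∫ ω, Y ω ∂μ ∧ MonotoneConvexLE μ X Y :=
  ⟨(integral_congr_ae h).le, fun K => (integral_congr_ae (h.fun_comp fun x => max (x - K) 0)).le⟩

variable [IsFiniteMeasure μ]

theorem integral_le_and_monotoneConvexLE_of_crossing {X Y D : Ω → ℝ} {c d : ℝ} (hd : 0 < d)
    (hX : Integrable X μ) (hY : Integrable Y μ)
    (hDX : Integrable (fun ω => D ω * X ω) μ) (hDY : Integrable (fun ω => D ω * Y ω) μ)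
    (hXY : ∫ ω, D ω * X ω ∂μ = ∫ ω, D ω * Y ω ∂μ)
    (hlow : ∀ᵐ ω ∂μ, X ω ≤ c → Y ω ≤ X ω) (hhigh : ∀ᵐ ω ∂μ, c < X ω → X ω ≤ Y ω)
    (hweight : ∀ᵐ ω ∂μ, d * (X ω - Y ω) ≤ D ω * (X ω - Y ω)) :
    ∫ ω, X ω ∂μ ≤ ∫ ω, Y ω ∂μ ∧ MonotoneConvexLE μ X Y := by
  refine ⟨integral_le_integral_of_const_mul_sub_le hd hX hY hDX hDY hXY ?_, fun K => ?_⟩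
  · filter_upwards [hweight] with ω hω
    rwa [← mul_sub]
  have hcall : ∀ {Z : Ω → ℝ}, Integrable Z μ → Integrable (fun ω => max (Z ω - K) 0) μ :=
    fun hZ => (hZ.sub (integrable_const K)).pos_part
  rcases le_or_gt c K with hK | hK
  · refine integral_mono_ae (hcall hX) (hcall hY) ?_
    filter_upwards [hhigh] with ω hω
    exact max_sub_le_max_sub_of_crossing hω hK
  · refine integral_le_integral_of_const_mul_sub_le hd (hcall hX) (hcall hY) hDX hDY hXY ?_
    filter_upwards [hlow, hhigh, hweight] with ω hlowω hhighω hweightω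
    exact mul_max_sub_sub_le_of_crossing hd.le hlowω hhighω hweightω hK

end Integral

theorem more_risk_averse_monotone_convex_order_general
    {Ω : Type*} [MeasureSpace Ω] [IsProbabilityMeasure (volume : Measure Ω)]
    (D : Ω → ℝ) (hDpos : ∀ᵐ ω, 0 < D ω)
    (UM' UM'' UL' UL'' : ℝ → ℝ)
    (hUMd' : ∀ x > (0 : ℝ), HasDerivAt UM' (UM'' x) x)
    (hULd' : ∀ x > (0 : ℝ), HasDerivAt UL' (UL'' x) x)
    (hUM'pos : ∀ x > (0 : ℝ), 0 < UM' x) (hUM''neg : ∀ x > (0 : ℝ), UM'' x < 0)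
    (hUL'pos : ∀ x > (0 : ℝ), 0 < UL' x) (hUL''neg : ∀ x > (0 : ℝ), UL'' x < 0)
    (hRA : ∀ x > (0 : ℝ), -UL'' x / UL' x ≤ -UM'' x / UM' x)
    (XM XL : Ω → ℝ)
    (hXMpos : ∀ᵐ ω, 0 < XM ω) (hXLpos : ∀ᵐ ω, 0 < XL ω)
    (hXMint : Integrable XM) (hXLint : Integrable XL)
    (hfocM : ∀ᵐ ω, UM' (XM ω) = D ω) (hfocL : ∀ᵐ ω, UL' (XL ω) = D ω)
    (hDXMint : Integrable (fun ω => D ω * XM ω))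
    (hDXLint : Integrable (fun ω => D ω * XL ω))
    (hbudget : (∫ ω, D ω * XM ω) = ∫ ω, D ω * XL ω) :
    (∫ ω, XM ω) ≤ (∫ ω, XL ω) ∧
      ∀ K : ℝ, ∫ ω, max (XM ω - K) 0 ≤ ∫ ω, max (XL ω - K) 0 := by
  have hM := strictAntiOn_Ioi_of_hasDerivAt_neg hUMd' hUM''neg
  have hL := strictAntiOn_Ioi_of_hasDerivAt_neg hULd' hUL''neg
  have hr := monotoneOn_div_of_riskAversion_le hUMd' hULd' hUM'pos hUL'pos hRA
  have hfoc : ∀ᵐ ω, UM' (XM ω) = UL' (XL ω) := by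
    filter_upwards [hfocM, hfocL] with ω hMω hLω
    rw [hMω, hLω]
  rcases isPreconnected_Ioi.exists_eq_or_forall_lt_or_forall_gt
    (fun x hx => (hUMd' x hx).continuousAt.continuousWithinAt)
    (fun x hx => (hULd' x hx).continuousAt.continuousWithinAt) with ⟨c, hc, hcross⟩ | hlt | hgt
  · have hbelow : ∀ z ∈ Ioc 0 c, UL' z ≤ UM' z := fun z hz =>
      le_of_monotoneOn_div_of_le_crossing hr (hUM'pos c hc) hcross hz.1 (hUM'pos z hz.1) hz.2
    have habove : ∀ z, c ≤ z → UM' z ≤ UL' z := fun z hz =>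
      le_of_monotoneOn_div_of_crossing_le hr hc (hUM'pos c hc) hcross
        (hUM'pos z (hc.trans_le hz)) hz
    have hlow : ∀ᵐ ω, XM ω ≤ c → XL ω ≤ XM ω := by
      filter_upwards [hXMpos, hXLpos, hfoc] with ω hx hy hxy
      exact le_of_apply_eq_of_le_crossing hM hL hc hx hy hbelow hxy
    have hhigh : ∀ᵐ ω, c < XM ω → XM ω ≤ XL ω := by
      filter_upwards [hXMpos, hXLpos, hfoc] with ω hx hy hxy
      exact le_of_apply_eq_of_crossing_lt hM hL hc hx hy habove hxy
    refine integral_le_and_monotoneConvexLE_of_crossing (hUM'pos c hc) hXMint hXLint hDXMint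
      hDXLint hbudget hlow hhigh ?_
    filter_upwards [hXMpos, hlow, hhigh, hfocM] with ω hx hlowω hhighω hD
    rw [← hD]
    exact mul_sub_le_mul_sub_of_crossing hM.antitoneOn hc hx hlowω hhighω
  · have hle : ∀ᵐ ω, XM ω ≤ XL ω := by
      filter_upwards [hXMpos, hXLpos, hfoc] with ω hx hy hxy
      exact (hM.le_iff_ge hy hx).1 (hxy ▸ (hlt _ hy).le)
    exact integral_le_and_monotoneConvexLE_of_ae_eq
      (ae_eq_of_ae_le_of_integral_mul_eq hDpos hDXLint hDXMint hbudget.symm hle).symm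
  · have hle : ∀ᵐ ω, XL ω ≤ XM ω := by
      filter_upwards [hXMpos, hXLpos, hfoc] with ω hx hy hxy
      exact (hM.le_iff_ge hx hy).1 (hxy ▸ (hgt _ hy).le)
    exact integral_le_and_monotoneConvexLE_of_ae_eq
      (ae_eq_of_ae_le_of_integral_mul_eq hDpos hDXMint hDXLint hbudget hle)

/-- **Monotone convex order in complete markets (Dybvig–Wang / Theorem 1).**
Let `D` be an a.s. strictly positive integrable density with `E[D] = 1`, and let
`U_M, U_L` be utility functions on `(0,∞)` (twice differentiable, `U' > 0`, `U'' < 0`,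
Inada conditions) such that `U_M` is more risk averse than `U_L`.  If the a.s. strictly
positive integrable payoffs `X_M, X_L` satisfy the first-order conditions
`U_M'(X_M) = D`, `U_L'(X_L) = D` a.s. and have equal budgets `E[D·X_M] = E[D·X_L]`,
then `E[X_M] ≤ E[X_L]` and `X_M ≤_MC X_L`. -/
theorem more_risk_averse_monotone_convex_order
    {Ω : Type*} [MeasureSpace Ω] [IsProbabilityMeasure (volume : Measure Ω)]
    (D : Ω → ℝ) (hDpos : ∀ᵐ ω, 0 < D ω) (hDint : Integrable D)
    (hDmean : (∫ ω, D ω) = 1)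
    (UM UM' UM'' UL UL' UL'' : ℝ → ℝ)
    (hUMd : ∀ x > (0 : ℝ), HasDerivAt UM (UM' x) x)
    (hUMd' : ∀ x > (0 : ℝ), HasDerivAt UM' (UM'' x) x)
    (hULd : ∀ x > (0 : ℝ), HasDerivAt UL (UL' x) x)
    (hULd' : ∀ x > (0 : ℝ), HasDerivAt UL' (UL'' x) x)
    (hUM'pos : ∀ x > (0 : ℝ), 0 < UM' x) (hUM''neg : ∀ x > (0 : ℝ), UM'' x < 0)
    (hUL'pos : ∀ x > (0 : ℝ), 0 < UL' x) (hUL''neg : ∀ x > (0 : ℝ), UL'' x < 0)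
    (hUMinada0 : Tendsto UM' (nhdsWithin 0 (Ioi 0)) atTop)
    (hUMinadaTop : Tendsto UM' atTop (nhds 0))
    (hULinada0 : Tendsto UL' (nhdsWithin 0 (Ioi 0)) atTop)
    (hULinadaTop : Tendsto UL' atTop (nhds 0))
    (hRA : ∀ x > (0 : ℝ), -UL'' x / UL' x ≤ -UM'' x / UM' x)
    (XM XL : Ω → ℝ)
    (hXMpos : ∀ᵐ ω, 0 < XM ω) (hXLpos : ∀ᵐ ω, 0 < XL ω)
    (hXMint : Integrable XM) (hXLint : Integrable XL)
    (hfocM : ∀ᵐ ω, UM' (XM ω) = D ω) (hfocL : ∀ᵐ ω, UL' (XL ω) = D ω)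
    (hDXMint : Integrable (fun ω => D ω * XM ω))
    (hDXLint : Integrable (fun ω => D ω * XL ω))
    (hbudget : (∫ ω, D ω * XM ω) = ∫ ω, D ω * XL ω) :
    (∫ ω, XM ω) ≤ (∫ ω, XL ω) ∧
      ∀ K : ℝ, ∫ ω, max (XM ω - K) 0 ≤ ∫ ω, max (XL ω - K) 0 :=
  more_risk_averse_monotone_convex_order_general D hDpos UM' UM'' UL' UL'' hUMd' hULd' hUM'pos
    hUM''neg hUL'pos hUL''neg hRA XM XL hXMpos hXLpos hXMint hXLint hfocM hfocL hDXMint hDXLint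
    hbudget
end

section
/- Let (Ω, F, P) be a probability space, let D be an a.s. strictly positive integrable random variable with E[D] = 1, and let U_M, U_L be utility functions on (0,∞) such that −U_M''(x)/U_M'(x) ≥ −U_L''(x)/U_L'(x) for all x > 0, and suppose in addition that at least one of the functions x ↦ −U_M''(x)/U_M'(x), x ↦ −U_L''(x)/U_L'(x) is nonincreasing on (0,∞). Let X_M and X_L be a.s. strictly positive integrable random variables satisfying U_M'(X_M) = D and U_L'(X_L) = D almost surely, with D·X_M and D·X_L integrable and E[D·X_M] = E[D·X_L]. Then E[((X_M − E[X_M]) − K)⁺] ≤ E[((X_L − E[X_L]) − K)⁺] for every K ∈ ℝ; that is, X_M − E[X_M] ≤_C X_L − E[X_L]. -/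
/-!
Let `c = E[X_M] - E[X_L]`. Both payoffs are decreasing functions of the state price density `D`,
and for `c ≤ 0` the ratio `U_M'(x + c) / U_L'(x)` is nonincreasing: its logarithmic derivative is
`A_L(x) - A_M(x + c) ≤ 0`, where `A = -U'' / U'` is the absolute risk aversion, by the comparison
`A_L ≤ A_M` and the monotonicity of one of them. Consequently `X_M - X_L - c` changes sign at most
once, from negative to positive, as `D` increases.

With `c = 0` this gives `(κ - D) (X_M - X_L) ≤ 0` for a threshold `κ > 0`, and integrating against
the budget constraint `E[D (X_M - X_L)] = 0` yields `κ c ≤ 0`. For this `c`, the centered payoffs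
`Y = X_M - E[X_M]` and `Z = X_L - E[X_L]` have equal means and `Y - Z` changes sign once, from
positive to negative, as `Y` increases; this is the Karlin–Novikoff cut criterion for `Y ≤_C Z`.
-/

open MeasureTheory Set Filter

lemma antitoneOn_Ioi_of_hasDerivAt_nonpos {f f' : ℝ → ℝ} {a : ℝ}
    (hf : ∀ x > a, HasDerivAt f (f' x) x) (hf' : ∀ x > a, f' x ≤ 0) :
    AntitoneOn f (Ioi a) :=
  antitoneOn_of_hasDerivWithinAt_nonpos (convex_Ioi a)
    (fun x hx ↦ (hf x hx).continuousAt.continuousWithinAt)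
    (fun x hx ↦ by rw [interior_Ioi] at hx ⊢; exact (hf x hx).hasDerivWithinAt)
    (fun x hx ↦ hf' x (by rwa [interior_Ioi] at hx))

lemma le_comp_add_of_le_of_antitoneOn {r s : ℝ → ℝ} (hsr : ∀ x > 0, s x ≤ r x)
    (hanti : AntitoneOn r (Ioi 0) ∨ AntitoneOn s (Ioi 0)) {c x : ℝ} (hc : c ≤ 0)
    (hxc : 0 < x + c) : s x ≤ r (x + c) := by
  have hx : 0 < x := by linarith
  rcases hanti with hr | hs
  · exact (hsr x hx).trans (hr hxc hx (by linarith))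
  · exact (hs hxc hx (by linarith)).trans (hsr _ hxc)

lemma antitoneOn_comp_add_div {f f' g g' : ℝ → ℝ} {c : ℝ} (hc : c ≤ 0)
    (hf : ∀ x > 0, HasDerivAt f (f' x) x) (hg : ∀ x > 0, HasDerivAt g (g' x) x)
    (hfpos : ∀ x > 0, 0 < f x) (hgpos : ∀ x > 0, 0 < g x)
    (hle : ∀ x > -c, -g' x / g x ≤ -f' (x + c) / f (x + c)) :
    AntitoneOn (fun x ↦ f (x + c) / g x) (Ioi (-c)) := by
  refine antitoneOn_Ioi_of_hasDerivAt_nonpos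
    (f' := fun x ↦ (f' (x + c) * g x - f (x + c) * g' x) / g x ^ 2) (fun x hx ↦ ?_) ?_
  · have hxc : 0 < x + c := by linarith
    exact ((hf _ hxc).comp_add_const x c).div (hg x (by linarith)) (hgpos x (by linarith)).ne'
  · intro x hx
    have hfx := hfpos (x + c) (by linarith)
    have hgx := hgpos x (by linarith)
    have h := hle x hx
    rw [div_le_div_iff₀ hgx hfx] at h
    exact div_nonpos_of_nonpos_of_nonneg (by nlinarith) (by positivity)

/-- The ratio `f (· + c) / g` is `< 1` at `x'`, hence at every `x ≥ x'`, which would force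
`y < x + c`. -/
lemma lt_of_comp_add_div_antitoneOn {f g : ℝ → ℝ} {c : ℝ} (hc : c ≤ 0)
    (hf : StrictAntiOn f (Ioi 0)) (hgpos : ∀ x > 0, 0 < g x)
    (hratio : AntitoneOn (fun x ↦ f (x + c) / g x) (Ioi (-c)))
    {x y x' y' : ℝ} (hy : 0 < y) (hy' : 0 < y') (hfg : f y = g x) (hfg' : f y' = g x')
    (hxy : x + c < y) (hxy' : y' < x' + c) : x < x' := by
  by_contra! hx'x
  have hx'c : 0 < x' + c := hy'.trans hxy'
  have hratio' : f (x' + c) / g x' < 1 :=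
    (div_lt_one (hgpos x' (by linarith))).2 (hfg' ▸ hf hy' hx'c hxy')
  have hratio_x : f (x + c) < f y := by
    rw [hfg, ← div_lt_one (hgpos x (by linarith))]
    exact (hratio (show -c < x' by linarith) (show -c < x by linarith) hx'x).trans_lt hratio'
  linarith [(hf.lt_iff_gt (show 0 < x + c by linarith) hy).1 hratio_x]

section SingleCrossing

variable {Ω : Type*} [MeasurableSpace Ω] {μ : Measure Ω} {G : Set Ω}

lemma integral_nonpos_of_single_crossing {W ρ : Ω → ℝ} (hG : ∀ᵐ ω ∂μ, ω ∈ G)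
    (hρ : ∀ ω ∈ G, 0 < ρ ω) (hW : Integrable W μ) (hρW : Integrable (fun ω ↦ ρ ω * W ω) μ)
    (hρW0 : ∫ ω, ρ ω * W ω ∂μ = 0)
    (hcross : ∀ ω ∈ G, ∀ ω' ∈ G, W ω' < 0 → 0 < W ω → ρ ω' ≤ ρ ω) :
    ∫ ω, W ω ∂μ ≤ 0 := by
  by_cases hneg : ∃ ω' ∈ G, W ω' < 0
  swap
  · push Not at hneg
    have hρW_nonneg : 0 ≤ᵐ[μ] fun ω ↦ ρ ω * W ω := by
      filter_upwards [hG] with ω hω using mul_nonneg (hρ ω hω).le (hneg ω hω)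
    have hW0 : W =ᵐ[μ] fun _ ↦ 0 := by
      filter_upwards [hG, (integral_eq_zero_iff_of_nonneg_ae hρW_nonneg hρW).1 hρW0]
        with ω hω hzero
      exact (mul_eq_zero.1 hzero).resolve_left (hρ ω hω).ne'
    rw [integral_congr_ae hW0, integral_zero]
  by_cases hpos : ∃ ω ∈ G, 0 < W ω
  swap
  · push Not at hpos
    exact integral_nonpos_of_ae (by filter_upwards [hG] with ω hω using hpos ω hω)
  obtain ⟨ω₀', hω₀', hW₀'⟩ := hneg
  obtain ⟨ω₀, hω₀, hW₀⟩ := hpos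
  set S := ρ '' {ω' | ω' ∈ G ∧ W ω' < 0}
  have hSne : S.Nonempty := ⟨_, mem_image_of_mem ρ ⟨hω₀', hW₀'⟩⟩
  have hSbdd : BddAbove S := ⟨ρ ω₀, by
    rintro _ ⟨ω', ⟨hω', hW'⟩, rfl⟩
    exact hcross ω₀ hω₀ ω' hω' hW' hW₀⟩
  set κ := sSup S
  have hκ : 0 < κ := (hρ ω₀' hω₀').trans_le (le_csSup hSbdd (mem_image_of_mem ρ ⟨hω₀', hW₀'⟩))
  have hsep : ∀ᵐ ω ∂μ, (κ - ρ ω) * W ω ≤ 0 := by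
    filter_upwards [hG] with ω hω
    rcases lt_trichotomy (W ω) 0 with hW | hW | hW
    · exact mul_nonpos_of_nonneg_of_nonpos
        (sub_nonneg.2 (le_csSup hSbdd (mem_image_of_mem ρ ⟨hω, hW⟩))) hW.le
    · simp [hW]
    · refine mul_nonpos_of_nonpos_of_nonneg (sub_nonpos.2 (csSup_le hSne ?_)) hW.le
      rintro _ ⟨ω', ⟨hω', hW'⟩, rfl⟩
      exact hcross ω hω ω' hω' hW' hW
  have hκW : ∫ ω, (κ - ρ ω) * W ω ∂μ = κ * ∫ ω, W ω ∂μ := by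
    simp_rw [sub_mul]
    rw [integral_sub (hW.const_mul κ) hρW, hρW0, integral_const_mul, sub_zero]
  have := integral_nonpos_of_ae hsep
  rw [hκW] at this
  exact nonpos_of_mul_nonpos_right this hκ

/-- The Karlin–Novikoff cut criterion for the convex order. -/
lemma integral_max_sub_le_of_single_crossing [IsFiniteMeasure μ] {Y Z : Ω → ℝ}
    (hG : ∀ᵐ ω ∂μ, ω ∈ G) (hY : Integrable Y μ) (hZ : Integrable Z μ)
    (hmean : ∫ ω, Y ω ∂μ = ∫ ω, Z ω ∂μ)
    (hcross : ∀ ω ∈ G, ∀ ω' ∈ G, Z ω < Y ω → Y ω' < Z ω' → Y ω ≤ Y ω') (K : ℝ) :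
    ∫ ω, max (Y ω - K) 0 ∂μ ≤ ∫ ω, max (Z ω - K) 0 ∂μ := by
  have hYK : Integrable (fun ω ↦ max (Y ω - K) 0) μ := (hY.sub (integrable_const K)).pos_part
  have hZK : Integrable (fun ω ↦ max (Z ω - K) 0) μ := (hZ.sub (integrable_const K)).pos_part
  have hYZ : Integrable (fun ω ↦ Y ω - Z ω) μ := hY.sub hZ
  by_cases hlow : ∃ ω' ∈ G, Y ω' < Z ω' ∧ Y ω' < K
  · obtain ⟨ω', hω', hYZ', hYK'⟩ := hlow
    refine integral_mono_ae hYK hZK ?_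
    filter_upwards [hG] with ω hω
    have hYZK : Y ω ≤ Z ω ∨ Y ω < K := by
      rcases le_or_gt (Y ω) (Z ω) with h | h
      · exact .inl h
      · exact .inr ((hcross ω hω ω' hω' h hYZ').trans_lt hYK')
    refine max_le ?_ (le_max_right _ _)
    rcases hYZK with h | h <;> linarith [le_max_left (Z ω - K) 0, le_max_right (Z ω - K) 0]
  · push Not at hlow
    have hpt : ∀ᵐ ω ∂μ, max (Y ω - K) 0 ≤ max (Z ω - K) 0 + (Y ω - Z ω) := by
      filter_upwards [hG] with ω hω
      have hYZK : Z ω ≤ Y ω ∨ K ≤ Y ω := by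
        rcases le_or_gt (Z ω) (Y ω) with h | h
        · exact .inl h
        · exact .inr (hlow ω hω h)
      rcases hYZK with h | h <;>
        exact max_le (by linarith [le_max_left (Z ω - K) 0])
          (by linarith [le_max_left (Z ω - K) 0, le_max_right (Z ω - K) 0])
    calc ∫ ω, max (Y ω - K) 0 ∂μ
        ≤ ∫ ω, (max (Z ω - K) 0 + (Y ω - Z ω)) ∂μ := integral_mono_ae hYK (hZK.add hYZ) hpt
      _ = ∫ ω, max (Z ω - K) 0 ∂μ := by
        rw [integral_add hZK hYZ, integral_sub hY hZ, hmean, sub_self, add_zero]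

end SingleCrossing

theorem more_risk_averse_centered_convex_order_general
    {Ω : Type*} [MeasureSpace Ω] [IsProbabilityMeasure (volume : Measure Ω)]
    (D : Ω → ℝ)
    (UM' UM'' UL' UL'' : ℝ → ℝ)
    (hUMd' : ∀ x > (0 : ℝ), HasDerivAt UM' (UM'' x) x)
    (hULd' : ∀ x > (0 : ℝ), HasDerivAt UL' (UL'' x) x)
    (hUM'pos : ∀ x > (0 : ℝ), 0 < UM' x) (hUM''neg : ∀ x > (0 : ℝ), UM'' x < 0)
    (hUL'pos : ∀ x > (0 : ℝ), 0 < UL' x) (hUL''neg : ∀ x > (0 : ℝ), UL'' x < 0)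
    (hRA : ∀ x > (0 : ℝ), -UL'' x / UL' x ≤ -UM'' x / UM' x)
    (hNIARA : AntitoneOn (fun x => -UM'' x / UM' x) (Ioi 0) ∨
      AntitoneOn (fun x => -UL'' x / UL' x) (Ioi 0))
    (XM XL : Ω → ℝ)
    (hXMpos : ∀ᵐ ω, 0 < XM ω) (hXLpos : ∀ᵐ ω, 0 < XL ω)
    (hXMint : Integrable XM) (hXLint : Integrable XL)
    (hfocM : ∀ᵐ ω, UM' (XM ω) = D ω) (hfocL : ∀ᵐ ω, UL' (XL ω) = D ω)
    (hDXMint : Integrable (fun ω => D ω * XM ω))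
    (hDXLint : Integrable (fun ω => D ω * XL ω))
    (hbudget : (∫ ω, D ω * XM ω) = ∫ ω, D ω * XL ω) :
    ∀ K : ℝ, ∫ ω, max ((XM ω - ∫ ω', XM ω') - K) 0
      ≤ ∫ ω, max ((XL ω - ∫ ω', XL ω') - K) 0 := by
  have hUM' := strictAntiOn_Ioi_of_hasDerivAt_neg hUMd' hUM''neg
  have hUL' := strictAntiOn_Ioi_of_hasDerivAt_neg hULd' hUL''neg
  set G := {ω | 0 < XM ω ∧ 0 < XL ω ∧ UM' (XM ω) = D ω ∧ UL' (XL ω) = D ω}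
  have hG : ∀ᵐ ω, ω ∈ G := by
    filter_upwards [hXMpos, hXLpos, hfocM, hfocL] with ω h₁ h₂ h₃ h₄ using ⟨h₁, h₂, h₃, h₄⟩
  have hcross : ∀ c ≤ 0, ∀ ω ∈ G, ∀ ω' ∈ G,
      XL ω + c < XM ω → XM ω' < XL ω' + c → D ω' < D ω := by
    rintro c hc ω ⟨hXM, hXL, hM, hL⟩ ω' ⟨hXM', hXL', hM', hL'⟩ h h'
    have hratio := antitoneOn_comp_add_div hc hUMd' hULd' hUM'pos hUL'pos fun x hx ↦
      le_comp_add_of_le_of_antitoneOn hRA hNIARA hc (by linarith)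
    rw [← hL, ← hL']
    exact hUL' hXL hXL' <| lt_of_comp_add_div_antitoneOn hc hUM' hUL'pos hratio
      hXM hXM' (hM.trans hL.symm) (hM'.trans hL'.symm) h h'
  have hmean : (∫ ω, XM ω) ≤ ∫ ω, XL ω := by
    rw [← sub_nonpos, ← integral_sub hXMint hXLint]
    refine integral_nonpos_of_single_crossing hG (fun ω hω ↦ hω.2.2.1 ▸ hUM'pos _ hω.1)
      (hXMint.sub hXLint) (by simp_rw [mul_sub]; exact hDXMint.sub hDXLint)
      (by simp only [mul_sub]; rw [integral_sub hDXMint hDXLint, hbudget, sub_self])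
      fun ω hω ω' hω' h' h ↦ (hcross 0 le_rfl ω hω ω' hω' (by linarith) (by linarith)).le
  refine integral_max_sub_le_of_single_crossing hG (hXMint.sub (integrable_const _))
    (hXLint.sub (integrable_const _)) (by simp [integral_sub, hXMint, hXLint])
    fun ω hω ω' hω' h h' ↦ ?_
  have hD := hcross _ (sub_nonpos.2 hmean) ω hω ω' hω' (by linarith) (by linarith)
  rw [← hω.2.2.1, ← hω'.2.2.1] at hD
  linarith [(hUM'.lt_iff_gt hω'.1 hω.1).1 hD]

/-- **Convex order of centered payoffs in complete markets (Dybvig–Wang / Theorem 2).**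
Under the assumptions of the monotone convex order theorem, if in addition at least one
of the two absolute risk aversions is nonincreasing on `(0,∞)`, then the centered optimal
payoffs are ordered in the convex order: `X_M − E[X_M] ≤_C X_L − E[X_L]`. -/
theorem more_risk_averse_centered_convex_order
    {Ω : Type*} [MeasureSpace Ω] [IsProbabilityMeasure (volume : Measure Ω)]
    (D : Ω → ℝ) (hDpos : ∀ᵐ ω, 0 < D ω) (hDint : Integrable D)
    (hDmean : (∫ ω, D ω) = 1)
    (UM UM' UM'' UL UL' UL'' : ℝ → ℝ)
    (hUMd : ∀ x > (0 : ℝ), HasDerivAt UM (UM' x) x)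
    (hUMd' : ∀ x > (0 : ℝ), HasDerivAt UM' (UM'' x) x)
    (hULd : ∀ x > (0 : ℝ), HasDerivAt UL (UL' x) x)
    (hULd' : ∀ x > (0 : ℝ), HasDerivAt UL' (UL'' x) x)
    (hUM'pos : ∀ x > (0 : ℝ), 0 < UM' x) (hUM''neg : ∀ x > (0 : ℝ), UM'' x < 0)
    (hUL'pos : ∀ x > (0 : ℝ), 0 < UL' x) (hUL''neg : ∀ x > (0 : ℝ), UL'' x < 0)
    (hUMinada0 : Tendsto UM' (nhdsWithin 0 (Ioi 0)) atTop)
    (hUMinadaTop : Tendsto UM' atTop (nhds 0))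
    (hULinada0 : Tendsto UL' (nhdsWithin 0 (Ioi 0)) atTop)
    (hULinadaTop : Tendsto UL' atTop (nhds 0))
    (hRA : ∀ x > (0 : ℝ), -UL'' x / UL' x ≤ -UM'' x / UM' x)
    (hNIARA : AntitoneOn (fun x => -UM'' x / UM' x) (Ioi 0) ∨
      AntitoneOn (fun x => -UL'' x / UL' x) (Ioi 0))
    (XM XL : Ω → ℝ)
    (hXMpos : ∀ᵐ ω, 0 < XM ω) (hXLpos : ∀ᵐ ω, 0 < XL ω)
    (hXMint : Integrable XM) (hXLint : Integrable XL)
    (hfocM : ∀ᵐ ω, UM' (XM ω) = D ω) (hfocL : ∀ᵐ ω, UL' (XL ω) = D ω)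
    (hDXMint : Integrable (fun ω => D ω * XM ω))
    (hDXLint : Integrable (fun ω => D ω * XL ω))
    (hbudget : (∫ ω, D ω * XM ω) = ∫ ω, D ω * XL ω) :
    ∀ K : ℝ, ∫ ω, max ((XM ω - ∫ ω', XM ω') - K) 0
      ≤ ∫ ω, max ((XL ω - ∫ ω', XL ω') - K) 0 :=
  more_risk_averse_centered_convex_order_general D UM' UM'' UL' UL'' hUMd' hULd' hUM'pos hUM''neg
    hUL'pos hUL''neg hRA hNIARA XM XL hXMpos hXLpos hXMint hXLint hfocM hfocL hDXMint hDXLint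
    hbudget
end

section
/- Let F, G: (0,∞) → (0,∞) be continuous strictly decreasing functions such that x ↦ F(x)/G(x) is nonincreasing, and let ρ be a probability measure on (0,∞) such that F and G are ρ-integrable and ∫ F dρ = ∫ G dρ. Then there exists p > 0 with F(p) = G(p), and consequently, setting q := F(p), for every x > 0 either q ≤ G(x) ≤ F(x) or F(x) ≤ G(x) ≤ q. -/
/-!
Equal budgets rule out `G < F` (or `F < G`) everywhere on the support of `ρ`, so `F - G` changes
sign on `(0,∞)` and the intermediate value theorem yields a crossing point `p`. Since `F / G` is
nonincreasing and equals `1` at `p`, we get `G ≤ F` left of `p` and `F ≤ G` right of it, while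
`G` being decreasing places `G x` on the correct side of `q = G p`.
-/

open MeasureTheory Set

theorem integral_lt_integral_of_ae_lt {α : Type*} [MeasurableSpace α] {μ : Measure α} [NeZero μ]
    {f g : α → ℝ} (hf : Integrable f μ) (hg : Integrable g μ) (hlt : ∀ᵐ x ∂μ, f x < g x) :
    ∫ x, f x ∂μ < ∫ x, g x ∂μ := by
  rw [← sub_pos, ← integral_sub hg hf, integral_pos_iff_support_of_nonneg_ae
    (hlt.mono fun x hx => (sub_pos.2 hx).le) (hg.sub hf)]
  refine pos_iff_ne_zero.2 fun hnull => NeZero.ne μ (ae_eq_bot.1 ?_)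
  rw [← Filter.eventually_false_iff_eq_bot]
  filter_upwards [hlt, measure_eq_zero_iff_ae_notMem.1 hnull] with x hx hx'
  exact hx' (sub_pos.2 hx).ne'

theorem exists_le_of_integral_eq {α : Type*} [MeasurableSpace α] {μ : Measure α} [NeZero μ]
    {s : Set α} {f g : α → ℝ} (hs : ∀ᵐ x ∂μ, x ∈ s) (hf : Integrable f μ) (hg : Integrable g μ)
    (heq : ∫ x, f x ∂μ = ∫ x, g x ∂μ) : ∃ x ∈ s, f x ≤ g x := by
  by_contra! hlt
  exact (integral_lt_integral_of_ae_lt hg hf (hs.mono hlt)).ne heq.symm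

theorem le_and_le_or_le_and_le_of_crossing {α : Type*} [LinearOrder α] {s : Set α} {F G : α → ℝ}
    (hG : AntitoneOn G s) (hGpos : ∀ x ∈ s, 0 < G x)
    (hratio : AntitoneOn (fun x => F x / G x) s) {p : α} (hp : p ∈ s) (hFGp : F p = G p)
    {x : α} (hx : x ∈ s) : (F p ≤ G x ∧ G x ≤ F x) ∨ (F x ≤ G x ∧ G x ≤ F p) := by
  have hratio_p : F p / G p = 1 := by rw [hFGp, div_self (hGpos p hp).ne']
  rcases le_total x p with hxp | hpx
  · left
    have hratio_x : 1 ≤ F x / G x := hratio_p ▸ hratio hx hp hxp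
    exact ⟨hFGp ▸ hG hx hp hxp, (one_le_div (hGpos x hx)).1 hratio_x⟩
  · right
    have hratio_x : F x / G x ≤ 1 := hratio_p ▸ hratio hp hx hpx
    exact ⟨(div_le_one (hGpos x hx)).1 hratio_x, hFGp ▸ hG hp hx hpx⟩

theorem crossing_point_of_inverse_marginal_utilities_general
    (F G : ℝ → ℝ)
    (hFcont : ContinuousOn F (Ioi 0)) (hGcont : ContinuousOn G (Ioi 0))
    (hGanti : StrictAntiOn G (Ioi 0))
    (hGpos : ∀ x ∈ Ioi (0 : ℝ), 0 < G x)
    (hratio : AntitoneOn (fun x => F x / G x) (Ioi 0))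
    (ρ : Measure ℝ) [IsProbabilityMeasure ρ] (hρ : ρ (Ioi 0)ᶜ = 0)
    (hFint : Integrable F ρ) (hGint : Integrable G ρ)
    (heq : (∫ x, F x ∂ρ) = ∫ x, G x ∂ρ) :
    ∃ p > (0 : ℝ), F p = G p ∧
      ∀ x > (0 : ℝ), (F p ≤ G x ∧ G x ≤ F x) ∨ (F x ≤ G x ∧ G x ≤ F p) := by
  have hsupp : ∀ᵐ x ∂ρ, x ∈ Ioi (0 : ℝ) := mem_ae_iff.2 hρ
  obtain ⟨a, ha, hFGa⟩ := exists_le_of_integral_eq hsupp hFint hGint heq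
  obtain ⟨b, hb, hGFb⟩ := exists_le_of_integral_eq hsupp hGint hFint heq.symm
  obtain ⟨p, hp, hFGp⟩ := isPreconnected_Ioi.intermediate_value₂ ha hb hFcont hGcont hFGa hGFb
  exact ⟨p, hp, hFGp, fun x hx =>
    le_and_le_or_le_and_le_of_crossing hGanti.antitoneOn hGpos hratio hp hFGp hx⟩

/-- **Crossing point of inverse marginal utilities.**
Let `F, G : (0,∞) → (0,∞)` be continuous, strictly decreasing functions with
`F/G` nonincreasing, and let `ρ` be a probability measure concentrated on `(0,∞)`
with `F, G` integrable and `∫ F dρ = ∫ G dρ`.  Then there is `p > 0` with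
`F p = G p =: q`, and for every `x > 0` either `q ≤ G x ≤ F x` or `F x ≤ G x ≤ q`. -/
theorem crossing_point_of_inverse_marginal_utilities
    (F G : ℝ → ℝ)
    (hFcont : ContinuousOn F (Ioi 0)) (hGcont : ContinuousOn G (Ioi 0))
    (hFanti : StrictAntiOn F (Ioi 0)) (hGanti : StrictAntiOn G (Ioi 0))
    (hFpos : ∀ x ∈ Ioi (0 : ℝ), 0 < F x) (hGpos : ∀ x ∈ Ioi (0 : ℝ), 0 < G x)
    (hratio : AntitoneOn (fun x => F x / G x) (Ioi 0))
    (ρ : Measure ℝ) [IsProbabilityMeasure ρ] (hρ : ρ (Ioi 0)ᶜ = 0)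
    (hFint : Integrable F ρ) (hGint : Integrable G ρ)
    (heq : (∫ x, F x ∂ρ) = ∫ x, G x ∂ρ) :
    ∃ p > (0 : ℝ), F p = G p ∧
      ∀ x > (0 : ℝ), (F p ≤ G x ∧ G x ≤ F x) ∨ (F x ≤ G x ∧ G x ≤ F p) :=
  crossing_point_of_inverse_marginal_utilities_general F G hFcont hGcont hGanti hGpos hratio ρ hρ
    hFint hGint heq
end

section
/- Let X and Y be integrable real random variables with E[X] ≤ E[Y], and suppose there exists q ∈ ℝ such that almost surely either q ≤ X ≤ Y or Y ≤ X ≤ q (the disjunction holding pointwise for almost every outcome). Then E[(X−K)⁺] ≤ E[(Y−K)⁺] for every K ∈ ℝ; that is, X ≤_MC Y. -/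
/-!
For a strike `K ≥ q` the sandwich makes the call payoff `(X - K)⁺` pointwise at most `(Y - K)⁺`:
either `X ≤ Y`, or `X ≤ q ≤ K` and the payoff of `X` vanishes. Symmetrically, for `K ≤ q` the put
payoff `(K - X)⁺` is pointwise at most `(K - Y)⁺`, and put-call parity
`E[(Z - K)⁺] = E[Z] - K + E[(K - Z)⁺]` turns this, together with `E[X] ≤ E[Y]`, into the
inequality between the calls.
-/

open MeasureTheory

section Sandwich

variable {α : Type*} [AddCommGroup α] [LinearOrder α] [IsOrderedAddMonoid α]

theorem max_sub_zero_le_of_sandwich {q x y K : α} (hqK : q ≤ K)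
    (h : (q ≤ x ∧ x ≤ y) ∨ (y ≤ x ∧ x ≤ q)) : max (x - K) 0 ≤ max (y - K) 0 := by
  rcases h with ⟨-, hxy⟩ | ⟨-, hxq⟩
  · exact max_le_max (sub_le_sub_right hxy K) le_rfl
  · rw [max_eq_right (sub_nonpos.2 (hxq.trans hqK))]
    exact le_max_right _ _

-- Negating `x`, `y`, `q` and `K` preserves the sandwich and exchanges calls and puts.
theorem max_sub_zero_le_of_sandwich' {q x y K : α} (hKq : K ≤ q)
    (h : (q ≤ x ∧ x ≤ y) ∨ (y ≤ x ∧ x ≤ q)) : max (K - x) 0 ≤ max (K - y) 0 := by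
  have h' : (-q ≤ -x ∧ -x ≤ -y) ∨ (-y ≤ -x ∧ -x ≤ -q) := by
    simp only [neg_le_neg_iff]
    tauto
  simpa only [neg_sub_neg] using max_sub_zero_le_of_sandwich (neg_le_neg hKq) h'

end Sandwich

section Integral

variable {Ω : Type*} [MeasurableSpace Ω] {μ : Measure Ω} {X Y : Ω → ℝ} {q K : ℝ}

theorem integral_max_sub_zero_le_of_sandwich [IsFiniteMeasure μ] (hY : Integrable Y μ) (hqK : q ≤ K)
    (h : ∀ᵐ ω ∂μ, (q ≤ X ω ∧ X ω ≤ Y ω) ∨ (Y ω ≤ X ω ∧ X ω ≤ q)) :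
    ∫ ω, max (X ω - K) 0 ∂μ ≤ ∫ ω, max (Y ω - K) 0 ∂μ :=
  integral_mono_of_nonneg (.of_forall fun _ ↦ le_max_right _ _)
    ((hY.sub (integrable_const K)).pos_part)
    (h.mono fun _ ↦ max_sub_zero_le_of_sandwich hqK)

theorem integral_max_sub_zero_le_of_sandwich' [IsFiniteMeasure μ] (hY : Integrable Y μ) (hKq : K ≤ q)
    (h : ∀ᵐ ω ∂μ, (q ≤ X ω ∧ X ω ≤ Y ω) ∨ (Y ω ≤ X ω ∧ X ω ≤ q)) :
    ∫ ω, max (K - X ω) 0 ∂μ ≤ ∫ ω, max (K - Y ω) 0 ∂μ :=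
  integral_mono_of_nonneg (.of_forall fun _ ↦ le_max_right _ _)
    (((integrable_const K).sub hY).pos_part)
    (h.mono fun _ ↦ max_sub_zero_le_of_sandwich' hKq)

theorem integral_max_sub_zero_eq_add_integral_max_zero [IsProbabilityMeasure μ]
    (hX : Integrable X μ) (K : ℝ) :
    ∫ ω, max (X ω - K) 0 ∂μ = ∫ ω, X ω ∂μ - K + ∫ ω, max (K - X ω) 0 ∂μ := by
  have hcall : Integrable (fun ω ↦ max (X ω - K) 0) μ := (hX.sub (integrable_const K)).pos_part
  have hput : Integrable (fun ω ↦ max (K - X ω) 0) μ := ((integrable_const K).sub hX).pos_part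
  have hparity : ∫ ω, max (X ω - K) 0 ∂μ - ∫ ω, max (K - X ω) 0 ∂μ = ∫ ω, X ω - K ∂μ := by
    rw [← integral_sub hcall hput]
    simp_rw [← neg_sub _ K, max_zero_sub_max_neg_zero_eq_self]
  rw [integral_sub hX (integrable_const K), integral_const, probReal_univ, one_smul] at hparity
  linarith

end Integral

/-- **Sandwiched random variables with ordered means are ordered in the monotone
convex order.**  If `E[X] ≤ E[Y]` and there exists `q ∈ ℝ` such that almost surely
either `q ≤ X ≤ Y` or `Y ≤ X ≤ q`, then `E[(X-K)⁺] ≤ E[(Y-K)⁺]` for all `K`. -/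
theorem sandwich_implies_monotone_convex_order
    {Ω : Type*} [MeasureSpace Ω] [IsProbabilityMeasure (volume : Measure Ω)]
    (X Y : Ω → ℝ) (hX : Integrable X) (hY : Integrable Y)
    (hmean : (∫ ω, X ω) ≤ ∫ ω, Y ω)
    (q : ℝ)
    (hsandwich : ∀ᵐ ω, (q ≤ X ω ∧ X ω ≤ Y ω) ∨ (Y ω ≤ X ω ∧ X ω ≤ q)) :
    ∀ K : ℝ, ∫ ω, max (X ω - K) 0 ≤ ∫ ω, max (Y ω - K) 0 := by
  intro K
  rcases le_total q K with hqK | hKq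
  · exact integral_max_sub_zero_le_of_sandwich hY hqK hsandwich
  · have hput := integral_max_sub_zero_le_of_sandwich' hY hKq hsandwich
    rw [integral_max_sub_zero_eq_add_integral_max_zero hX,
      integral_max_sub_zero_eq_add_integral_max_zero hY]
    linarith
end

section
/- Let D be a nonnegative integrable random variable, let X and Y be integrable random variables such that D·X and D·Y are integrable with E[D·X] = E[D·Y], and let p > 0 be a constant such that (D − p)(Y − X) ≤ 0 almost surely. Then E[X] ≤ E[Y]. -/
open MeasureTheory Set

/-- **The less risk averse agent's payoff has a larger mean.**
If `D ≥ 0` a.s. is integrable, `X, Y` are integrable with `E[D·X] = E[D·Y]`,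
and `p > 0` is such that `(D - p)(Y - X) ≤ 0` a.s., then `E[X] ≤ E[Y]`. -/
theorem mean_le_of_equal_price_and_crossing
    {Ω : Type*} [MeasureSpace Ω] [IsProbabilityMeasure (volume : Measure Ω)]
    (D X Y : Ω → ℝ) (hDnonneg : ∀ᵐ ω, 0 ≤ D ω) (hDint : Integrable D)
    (hX : Integrable X) (hY : Integrable Y)
    (hDXint : Integrable (fun ω => D ω * X ω))
    (hDYint : Integrable (fun ω => D ω * Y ω))
    (hprice : (∫ ω, D ω * X ω) = ∫ ω, D ω * Y ω)
    (p : ℝ) (hp : 0 < p)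
    (hcross : ∀ᵐ ω, (D ω - p) * (Y ω - X ω) ≤ 0) :
    (∫ ω, X ω) ≤ ∫ ω, Y ω := by
  have hint : Integrable (fun ω => (D ω - p) * (Y ω - X ω)) := by
    have : (fun ω => (D ω - p) * (Y ω - X ω)) =
        fun ω => D ω * Y ω - D ω * X ω - (p * Y ω - p * X ω) := by
      funext ω; ring
    rw [this]
    exact ((hDYint.sub hDXint).sub ((hY.const_mul p).sub (hX.const_mul p)))
  have h1 : (∫ ω, (D ω - p) * (Y ω - X ω)) ≤ 0 := integral_nonpos_of_ae hcross
  have h2 : (∫ ω, (D ω - p) * (Y ω - X ω)) =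
      (∫ ω, D ω * Y ω) - (∫ ω, D ω * X ω) - p * ((∫ ω, Y ω) - ∫ ω, X ω) := by
    have heq : (fun ω => (D ω - p) * (Y ω - X ω)) =
        fun ω => D ω * Y ω - D ω * X ω - p * (Y ω - X ω) := by
      funext ω; ring
    have i1 : Integrable (fun ω => D ω * Y ω - D ω * X ω) := hDYint.sub hDXint
    have i2 : Integrable (fun ω => p * (Y ω - X ω)) := (hY.sub hX).const_mul p
    rw [heq, integral_sub i1 i2, integral_sub hDYint hDXint, integral_const_mul,
      integral_sub hY hX]
  rw [h2, hprice] at h1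
  nlinarith
end

section
/- Let U_M, U_L: (0,∞) → ℝ be twice differentiable functions with U_M' > 0 and U_L' > 0, such that −U_M''(x)/U_M'(x) ≥ −U_L''(x)/U_L'(x) for all x > 0, and suppose at least one of the functions x ↦ −U_M''(x)/U_M'(x), x ↦ −U_L''(x)/U_L'(x) is nonincreasing on (0,∞). Then for every l ≥ 0, the function x ↦ U_L'(x+l)/U_M'(x) is monotone nondecreasing on (0,∞). -/
open Set

/-! The ratio `f / g` of positive functions increases wherever `f` is less risk averse than `g`,
i.e. `f'/f ≥ g'/g`. For `x ≤ x + l`, if `A_M` is nonincreasing then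
`A_L(x + l) ≤ A_M(x + l) ≤ A_M(x)`, and if `A_L` is nonincreasing then
`A_L(x + l) ≤ A_L(x) ≤ A_M(x)`; so `U_L'(· + l)` is less risk averse than `U_M'`. -/

theorem le_of_pointwise_le_of_antitoneOn_or_antitoneOn {α β : Type*} [Preorder α] [Preorder β]
    {s : Set α} {a b : α → β} (hab : ∀ x ∈ s, a x ≤ b x) (hanti : AntitoneOn b s ∨ AntitoneOn a s)
    {x y : α} (hx : x ∈ s) (hy : y ∈ s) (hxy : x ≤ y) : a y ≤ b x := by
  rcases hanti with hb | ha
  · exact (hab y hy).trans (hb hx hy hxy)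
  · exact (ha hx hy hxy).trans (hab x hx)

theorem monotoneOn_div_of_neg_logDeriv_le {D : Set ℝ} (hD : Convex ℝ D) {f f' g g' : ℝ → ℝ}
    (hf : ∀ x ∈ D, HasDerivAt f (f' x) x) (hg : ∀ x ∈ D, HasDerivAt g (g' x) x)
    (hf₀ : ∀ x ∈ D, 0 < f x) (hg₀ : ∀ x ∈ D, 0 < g x)
    (hfg : ∀ x ∈ D, -f' x / f x ≤ -g' x / g x) :
    MonotoneOn (fun x => f x / g x) D := by
  have hderiv : ∀ x ∈ D,
      HasDerivAt (fun x => f x / g x) ((f' x * g x - f x * g' x) / g x ^ 2) x :=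
    fun x hx => (hf x hx).div (hg x hx) (hg₀ x hx).ne'
  refine monotoneOn_of_hasDerivWithinAt_nonneg hD
    (fun x hx => (hderiv x hx).continuousAt.continuousWithinAt)
    (fun x hx => (hderiv x (interior_subset hx)).hasDerivWithinAt) fun x hx => ?_
  have hx := interior_subset hx
  have hcross : f x * g' x ≤ f' x * g x := by
    have := hfg x hx
    rw [div_le_div_iff₀ (hf₀ x hx) (hg₀ x hx)] at this
    linarith
  exact div_nonneg (sub_nonneg.mpr hcross) (sq_nonneg _)

theorem shifted_ratio_monotone_of_nonincreasing_risk_aversion_general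
    (UM' UM'' UL' UL'' : ℝ → ℝ)
    (hUMd' : ∀ x > (0 : ℝ), HasDerivAt UM' (UM'' x) x)
    (hULd' : ∀ x > (0 : ℝ), HasDerivAt UL' (UL'' x) x)
    (hUM'pos : ∀ x > (0 : ℝ), 0 < UM' x)
    (hUL'pos : ∀ x > (0 : ℝ), 0 < UL' x)
    (hRA : ∀ x > (0 : ℝ), -UL'' x / UL' x ≤ -UM'' x / UM' x)
    (hNIARA : AntitoneOn (fun x => -UM'' x / UM' x) (Ioi 0) ∨
      AntitoneOn (fun x => -UL'' x / UL' x) (Ioi 0)) :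
    ∀ l ≥ (0 : ℝ), MonotoneOn (fun x => UL' (x + l) / UM' x) (Ioi 0) := by
  intro l hl
  have hshift : ∀ x ∈ Ioi (0 : ℝ), x + l ∈ Ioi 0 := fun x hx => by
    simp only [mem_Ioi] at hx ⊢; linarith
  refine monotoneOn_div_of_neg_logDeriv_le (convex_Ioi 0)
    (fun x hx => (hULd' _ (hshift x hx)).comp_add_const x l) hUMd'
    (fun x hx => hUL'pos _ (hshift x hx)) hUM'pos fun x hx => ?_
  exact le_of_pointwise_le_of_antitoneOn_or_antitoneOn hRA hNIARA hx (hshift x hx)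
    (le_add_of_nonneg_right hl)

/-- **Shifted ratio of marginal utilities is nondecreasing.**
If `U_M` is more risk averse than `U_L` on `(0,∞)` and at least one of the two
absolute risk aversions is nonincreasing, then for every `l ≥ 0` the function
`x ↦ U_L'(x + l) / U_M'(x)` is nondecreasing on `(0,∞)`. -/
theorem shifted_ratio_monotone_of_nonincreasing_risk_aversion
    (UM UM' UM'' UL UL' UL'' : ℝ → ℝ)
    (hUMd : ∀ x > (0 : ℝ), HasDerivAt UM (UM' x) x)
    (hUMd' : ∀ x > (0 : ℝ), HasDerivAt UM' (UM'' x) x)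
    (hULd : ∀ x > (0 : ℝ), HasDerivAt UL (UL' x) x)
    (hULd' : ∀ x > (0 : ℝ), HasDerivAt UL' (UL'' x) x)
    (hUM'pos : ∀ x > (0 : ℝ), 0 < UM' x)
    (hUL'pos : ∀ x > (0 : ℝ), 0 < UL' x)
    (hRA : ∀ x > (0 : ℝ), -UL'' x / UL' x ≤ -UM'' x / UM' x)
    (hNIARA : AntitoneOn (fun x => -UM'' x / UM' x) (Ioi 0) ∨
      AntitoneOn (fun x => -UL'' x / UL' x) (Ioi 0)) :
    ∀ l ≥ (0 : ℝ), MonotoneOn (fun x => UL' (x + l) / UM' x) (Ioi 0) :=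
  shifted_ratio_monotone_of_nonincreasing_risk_aversion_general UM' UM'' UL' UL'' hUMd' hULd'
    hUM'pos hUL'pos hRA hNIARA
end

section
/- Let (R_i)_{i=1}^N be independent, identically distributed integrable real random variables with common mean b = E[R_1], and let π_M, π_L ∈ ℝ satisfy π_M·π_L ≥ 0 (same sign) and |π_M| ≤ |π_L|. Set X = ∏_{i=1}^N (1 + π_M(R_i − b)) and Y = ∏_{i=1}^N (1 + π_L(R_i − b)). Then E[X] = E[Y] and E[(X−K)⁺] ≤ E[(Y−K)⁺] for every K ∈ ℝ; that is, X ≤_C Y. -/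
open MeasureTheory ProbabilityTheory Set Finset

/-!
Let `X^π_n = ∏_{i<n} (1 + π (R_i - b))`, so that `X^π_{n+1} = X^π_n (1 + π (R_n - b))` with `X^π_n`
independent of `R_n`. By induction on `n`, `E[(c X^{π_M}_n - K)⁺] ≤ E[(c X^{π_L}_n - K)⁺]` for all
`c, K`. In the inductive step one first conditions on `X^{π_M}_n`: the one-factor comparison is
`E[φ(t Z)] ≤ E[φ(Z)]` for the convex function `φ z = (a (1 + z) - K)⁺`, the centred variable
`Z = π_L (R_n - b)` and `t = π_M / π_L ∈ [0, 1]`, which follows from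
`φ(t Z) ≤ t φ(Z) + (1 - t) φ(0)` and Jensen's inequality `φ(0) ≤ E[φ(Z)]`. Conditioning on `R_n`
instead, the induction hypothesis replaces `X^{π_M}_n` by `X^{π_L}_n`. Both means equal `1`, by
independence.
-/

theorem exists_mem_Icc_eq_mul_of_mul_nonneg_of_abs_le {x y : ℝ} (hxy : 0 ≤ x * y)
    (habs : |x| ≤ |y|) : ∃ t ∈ Icc (0 : ℝ) 1, x = t * y := by
  rcases eq_or_ne y 0 with rfl | hy
  · exact ⟨0, by simp, by simpa using habs⟩
  · refine ⟨x / y, ⟨?_, ?_⟩, by field_simp⟩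
    · rw [show x / y = x * y / (y * y) by field_simp]
      exact div_nonneg hxy (mul_self_nonneg y)
    · exact (le_abs_self _).trans (by rw [abs_div]; exact div_le_one_of_le₀ habs (abs_nonneg _))

theorem measurable_one_add_mul_sub (b π : ℝ) : Measurable fun x : ℝ => 1 + π * (x - b) := by
  fun_prop

theorem convexOn_posPart_affine (a c : ℝ) : ConvexOn ℝ univ fun z : ℝ => max (a * z + c) 0 := by
  have affine : ConvexOn ℝ univ fun z : ℝ => a * z + c :=
    ⟨convex_univ, fun x _ y _ p q _ _ hpq => le_of_eq (by
      simp only [smul_eq_mul]; linear_combination (-c) * hpq)⟩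
  exact affine.sup (convexOn_const 0 convex_univ)

theorem MeasureTheory.Integrable.one_add_mul_sub {Ω : Type*} [MeasurableSpace Ω] {μ : Measure Ω}
    [IsFiniteMeasure μ] {S : Ω → ℝ} (hS : Integrable S μ) (b π : ℝ) :
    Integrable (fun ω => 1 + π * (S ω - b)) μ :=
  (integrable_const 1).add ((hS.sub (integrable_const b)).const_mul π)

section OneFactor

variable {Ω : Type*} [MeasurableSpace Ω] {μ : Measure Ω} [IsProbabilityMeasure μ]

theorem ConvexOn.integral_comp_mul_le {φ : ℝ → ℝ} (hφ : ConvexOn ℝ univ φ) {Z : Ω → ℝ}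
    (hZ : Integrable Z μ) (hZ0 : ∫ ω, Z ω ∂μ = 0) {t : ℝ} (ht0 : 0 ≤ t) (ht1 : t ≤ 1)
    (hφZ : Integrable (fun ω => φ (Z ω)) μ) (hφtZ : Integrable (fun ω => φ (t * Z ω)) μ) :
    ∫ ω, φ (t * Z ω) ∂μ ≤ ∫ ω, φ (Z ω) ∂μ := by
  have jensen : φ 0 ≤ ∫ ω, φ (Z ω) ∂μ := by
    simpa only [hZ0] using hφ.map_integral_le (hφ.continuousOn isOpen_univ) isClosed_univ
      (by simp) hZ hφZ
  have chord : ∀ z, φ (t * z) ≤ t * φ z + (1 - t) * φ 0 := fun z => by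
    simpa using hφ.2 (mem_univ z) (mem_univ 0) ht0 (by linarith) (by ring)
  calc ∫ ω, φ (t * Z ω) ∂μ ≤ ∫ ω, (t * φ (Z ω) + (1 - t) * φ 0) ∂μ :=
        integral_mono hφtZ ((hφZ.const_mul t).add (integrable_const _)) fun ω => chord (Z ω)
    _ = t * ∫ ω, φ (Z ω) ∂μ + (1 - t) * φ 0 := by
        rw [integral_add (hφZ.const_mul t) (integrable_const _), integral_const_mul]
        simp
    _ ≤ ∫ ω, φ (Z ω) ∂μ := by nlinarith

theorem integral_mul_sub_eq_zero {S : Ω → ℝ} (hS : Integrable S μ) {b : ℝ}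
    (hSb : ∫ ω, S ω ∂μ = b) (π : ℝ) : ∫ ω, π * (S ω - b) ∂μ = 0 := by
  simp [integral_const_mul, integral_sub hS (integrable_const b), hSb]

theorem integral_posPart_affine_le {S : Ω → ℝ} (hS : Integrable S μ) {b : ℝ}
    (hSb : ∫ ω, S ω ∂μ = b) {πM πL : ℝ} (hsign : 0 ≤ πM * πL) (habs : |πM| ≤ |πL|) (a K : ℝ) :
    ∫ ω, max (a * (1 + πM * (S ω - b)) - K) 0 ∂μ
      ≤ ∫ ω, max (a * (1 + πL * (S ω - b)) - K) 0 ∂μ := by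
  obtain ⟨t, ⟨ht0, ht1⟩, rfl⟩ := exists_mem_Icc_eq_mul_of_mul_nonneg_of_abs_le hsign habs
  have hZ : Integrable (fun ω => πL * (S ω - b)) μ := (hS.sub (integrable_const b)).const_mul πL
  have hposPart : ∀ {Y : Ω → ℝ}, Integrable Y μ →
      Integrable (fun ω => max (a * Y ω + (a - K)) 0) μ :=
    fun hY => ((hY.const_mul a).add (integrable_const _)).pos_part
  have key := (convexOn_posPart_affine a (a - K)).integral_comp_mul_le hZ
    (integral_mul_sub_eq_zero hS hSb πL) ht0 ht1 (hposPart hZ) (hposPart (hZ.const_mul t))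
  convert key using 4 <;> ring

end OneFactor

section Independence

variable {Ω ι α β : Type*} [MeasurableSpace Ω] [MeasurableSpace α] [MeasurableSpace β]
  {μ : Measure Ω}

theorem ProbabilityTheory.iIndepFun.indepFun_finset_prod_comp {f : ι → Ω → β} {g : ι → β → ℝ}
    (hf : iIndepFun f μ) (hfm : ∀ i, AEMeasurable (f i) μ) (hg : ∀ i, Measurable (g i))
    {s : Finset ι} {j : ι} (hj : j ∉ s) : IndepFun (fun ω => ∏ i ∈ s, g i (f i ω)) (f j) μ := by
  have hφ : Measurable fun x : s → β => ∏ i : s, g i (x i) :=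
    Finset.measurable_prod _ fun i _ => (hg i).comp (measurable_pi_apply i)
  have hψ : Measurable fun y : ({j} : Finset ι) → β => y ⟨j, mem_singleton_self j⟩ :=
    measurable_pi_apply _
  have h := (hf.indepFun_finset₀ s {j} (disjoint_singleton_right.2 hj) hfm).comp hφ hψ
  convert h using 1
  · ext ω
    exact (Finset.prod_coe_sort s fun i => g i (f i ω)).symm
  · rfl

theorem ProbabilityTheory.iIndepFun.integrable_finset_prod_comp {f : ι → Ω → β} {g : ι → β → ℝ}
    (hf : iIndepFun f μ) (hfm : ∀ i, AEMeasurable (f i) μ) (hg : ∀ i, Measurable (g i))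
    (hgi : ∀ i, Integrable (fun ω => g i (f i ω)) μ) (s : Finset ι) :
    Integrable (fun ω => ∏ i ∈ s, g i (f i ω)) μ := by
  classical
  have := hf.isProbabilityMeasure
  induction s using Finset.induction_on with
  | empty => simp
  | insert j s hj ih =>
    have hind : IndepFun (fun ω => g j (f j ω)) (fun ω => ∏ i ∈ s, g i (f i ω)) μ :=
      (hf.indepFun_finset_prod_comp hfm hg hj).symm.comp (hg j) measurable_id
    simp only [prod_insert hj]
    exact hind.integrable_mul (hgi j) ih

theorem ProbabilityTheory.iIndepFun.integral_finset_prod_comp {f : ι → Ω → β} {g : ι → β → ℝ}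
    (hf : iIndepFun f μ) (hfm : ∀ i, AEMeasurable (f i) μ) (hg : ∀ i, Measurable (g i))
    (hgi : ∀ i, Integrable (fun ω => g i (f i ω)) μ) (s : Finset ι) :
    ∫ ω, ∏ i ∈ s, g i (f i ω) ∂μ = ∏ i ∈ s, ∫ ω, g i (f i ω) ∂μ := by
  classical
  induction s using Finset.induction_on with
  | empty => simp [hf.isProbabilityMeasure]
  | insert j s hj ih =>
    have hind : IndepFun (fun ω => g j (f j ω)) (fun ω => ∏ i ∈ s, g i (f i ω)) μ :=
      (hf.indepFun_finset_prod_comp hfm hg hj).symm.comp (hg j) measurable_id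
    simp only [prod_insert hj]
    rw [hind.integral_fun_mul_eq_mul_integral (hgi j).aestronglyMeasurable
      (hf.integrable_finset_prod_comp hfm hg hgi s).aestronglyMeasurable, ih]

variable [IsFiniteMeasure μ] {U : Ω → α} {V : Ω → β} {g : α → β → ℝ}

theorem ProbabilityTheory.IndepFun.integrable_uncurry_prod (hUV : IndepFun U V μ)
    (hU : AEMeasurable U μ) (hV : AEMeasurable V μ) (hg : StronglyMeasurable (Function.uncurry g))
    (hgi : Integrable (fun ω => g (U ω) (V ω)) μ) :
    Integrable (Function.uncurry g) ((μ.map U).prod (μ.map V)) := by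
  rw [← (indepFun_iff_map_prod_eq_prod_map_map hU hV).mp hUV]
  exact (integrable_map_measure hg.aestronglyMeasurable (hU.prodMk hV)).mpr hgi

theorem ProbabilityTheory.IndepFun.integral_comp_eq_integral_integral (hUV : IndepFun U V μ)
    (hU : AEMeasurable U μ) (hV : AEMeasurable V μ) (hg : StronglyMeasurable (Function.uncurry g))
    (hgi : Integrable (fun ω => g (U ω) (V ω)) μ) :
    ∫ ω, g (U ω) (V ω) ∂μ = ∫ u, ∫ v, g u v ∂(μ.map V) ∂(μ.map U) :=
  calc ∫ ω, g (U ω) (V ω) ∂μ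
      = ∫ p, Function.uncurry g p ∂(μ.map fun ω => (U ω, V ω)) :=
        (integral_map (hU.prodMk hV) hg.aestronglyMeasurable).symm
    _ = ∫ p, Function.uncurry g p ∂((μ.map U).prod (μ.map V)) := by
        rw [(indepFun_iff_map_prod_eq_prod_map_map hU hV).mp hUV]
    _ = _ := integral_prod _ (hUV.integrable_uncurry_prod hU hV hg hgi)

theorem ProbabilityTheory.IndepFun.integral_comp_le_of_forall {W : Ω → β} {h : α → β → ℝ}
    (hUV : IndepFun U V μ) (hUW : IndepFun U W μ) (hU : AEMeasurable U μ)
    (hV : AEMeasurable V μ) (hW : AEMeasurable W μ)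
    (hg : StronglyMeasurable (Function.uncurry g)) (hh : StronglyMeasurable (Function.uncurry h))
    (hgi : Integrable (fun ω => g (U ω) (V ω)) μ) (hhi : Integrable (fun ω => h (U ω) (W ω)) μ)
    (hle : ∀ u, ∫ ω, g u (V ω) ∂μ ≤ ∫ ω, h u (W ω) ∂μ) :
    ∫ ω, g (U ω) (V ω) ∂μ ≤ ∫ ω, h (U ω) (W ω) ∂μ := by
  rw [hUV.integral_comp_eq_integral_integral hU hV hg hgi,
    hUW.integral_comp_eq_integral_integral hU hW hh hhi]
  refine integral_mono (hUV.integrable_uncurry_prod hU hV hg hgi).integral_prod_left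
    (hUW.integrable_uncurry_prod hU hW hh hhi).integral_prod_left fun u => ?_
  have hgu : AEStronglyMeasurable (g u) (μ.map V) :=
    (hg.comp_measurable measurable_prodMk_left).aestronglyMeasurable
  have hhu : AEStronglyMeasurable (h u) (μ.map W) :=
    (hh.comp_measurable measurable_prodMk_left).aestronglyMeasurable
  rw [integral_map hV hgu, integral_map hW hhu]
  exact hle u

end Independence

section Wealth

variable {Ω : Type*} [MeasurableSpace Ω] {μ : Measure Ω}

theorem integral_posPart_mul_affine_le [IsProbabilityMeasure μ] {A B S : Ω → ℝ}
    (hA : Integrable A μ) (hB : Integrable B μ) (hS : Integrable S μ)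
    (hAS : IndepFun A S μ) (hBS : IndepFun B S μ) {b : ℝ} (hSb : ∫ ω, S ω ∂μ = b)
    {πM πL : ℝ} (hsign : 0 ≤ πM * πL) (habs : |πM| ≤ |πL|)
    (hAB : ∀ c K : ℝ, ∫ ω, max (c * A ω - K) 0 ∂μ ≤ ∫ ω, max (c * B ω - K) 0 ∂μ) (c K : ℝ) :
    ∫ ω, max (c * (A ω * (1 + πM * (S ω - b))) - K) 0 ∂μ
      ≤ ∫ ω, max (c * (B ω * (1 + πL * (S ω - b))) - K) 0 ∂μ := by
  let F (π : ℝ) : ℝ → ℝ → ℝ := fun a s => max (c * (a * (1 + π * (s - b))) - K) 0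
  have hF : ∀ π, StronglyMeasurable (Function.uncurry (F π)) := fun π =>
    (by fun_prop : Measurable (Function.uncurry (F π))).stronglyMeasurable
  have hF_swap : StronglyMeasurable (Function.uncurry fun s a => F πL a s) :=
    (hF πL).comp_measurable measurable_swap
  have hFi : ∀ π {T : Ω → ℝ}, Integrable T μ → IndepFun T S μ →
      Integrable (fun ω => F π (T ω) (S ω)) μ := fun π T hT hTS =>
    (((hTS.comp measurable_id (measurable_one_add_mul_sub b π)).integrable_mul hT
      (hS.one_add_mul_sub b π)).const_mul c |>.sub (integrable_const K)).pos_part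
  calc ∫ ω, F πM (A ω) (S ω) ∂μ ≤ ∫ ω, F πL (A ω) (S ω) ∂μ :=
        hAS.integral_comp_le_of_forall hAS hA.aemeasurable hS.aemeasurable hS.aemeasurable
          (hF πM) (hF πL) (hFi πM hA hAS) (hFi πL hA hAS) fun a => by
            simpa only [F, mul_assoc] using integral_posPart_affine_le hS hSb hsign habs (c * a) K
    _ ≤ ∫ ω, F πL (B ω) (S ω) ∂μ := by
        refine hAS.symm.integral_comp_le_of_forall (g := fun s a => F πL a s) hBS.symm
          hS.aemeasurable hA.aemeasurable hB.aemeasurable hF_swap hF_swap (hFi πL hA hAS)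
          (hFi πL hB hBS) fun s => ?_
        have hcomm : ∀ x, c * (x * (1 + πL * (s - b))) = c * (1 + πL * (s - b)) * x :=
          fun x => by ring
        simpa only [F, hcomm] using hAB (c * (1 + πL * (s - b))) K

def wealth (R : ℕ → Ω → ℝ) (b π : ℝ) (n : ℕ) (ω : Ω) : ℝ :=
  ∏ i ∈ range n, (1 + π * (R i ω - b))

variable {R : ℕ → Ω → ℝ} {b : ℝ}

theorem integrable_wealth (hR : iIndepFun R μ) (hRi : ∀ i, Integrable (R i) μ) (π : ℝ) (n : ℕ) :
    Integrable (wealth R b π n) μ := by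
  have := hR.isProbabilityMeasure
  exact hR.integrable_finset_prod_comp (fun i => (hRi i).aemeasurable)
    (fun _ => measurable_one_add_mul_sub b π)
    (fun i => (hRi i).one_add_mul_sub b π) _

theorem integral_wealth (hR : iIndepFun R μ) (hRi : ∀ i, Integrable (R i) μ)
    (hRb : ∀ i, ∫ ω, R i ω ∂μ = b) (π : ℝ) (n : ℕ) : ∫ ω, wealth R b π n ω ∂μ = 1 := by
  have := hR.isProbabilityMeasure
  simp only [wealth]
  rw [hR.integral_finset_prod_comp (fun i => (hRi i).aemeasurable)
    (fun _ => measurable_one_add_mul_sub b π) fun i => (hRi i).one_add_mul_sub b π]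
  refine prod_eq_one fun i _ => ?_
  have hZ : Integrable (fun ω => π * (R i ω - b)) μ :=
    ((hRi i).sub (integrable_const b)).const_mul π
  rw [integral_add (integrable_const 1) hZ, integral_mul_sub_eq_zero (hRi i) (hRb i)]
  simp

theorem indepFun_wealth (hR : iIndepFun R μ) (hRm : ∀ i, AEMeasurable (R i) μ) (π : ℝ)
    (n : ℕ) : IndepFun (wealth R b π n) (R n) μ :=
  hR.indepFun_finset_prod_comp hRm (fun _ => measurable_one_add_mul_sub b π) notMem_range_self

theorem integral_posPart_wealth_le (hR : iIndepFun R μ) (hRi : ∀ i, Integrable (R i) μ)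
    (hRb : ∀ i, ∫ ω, R i ω ∂μ = b) {πM πL : ℝ} (hsign : 0 ≤ πM * πL) (habs : |πM| ≤ |πL|)
    (n : ℕ) (c K : ℝ) :
    ∫ ω, max (c * wealth R b πM n ω - K) 0 ∂μ ≤ ∫ ω, max (c * wealth R b πL n ω - K) 0 ∂μ := by
  have := hR.isProbabilityMeasure
  induction n generalizing c K with
  | zero => simp [wealth]
  | succ n ih =>
    simp only [wealth, prod_range_succ]
    exact integral_posPart_mul_affine_le (integrable_wealth hR hRi πM n)
      (integrable_wealth hR hRi πL n) (hRi n)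
      (indepFun_wealth hR (fun i => (hRi i).aemeasurable) πM n)
      (indepFun_wealth hR (fun i => (hRi i).aemeasurable) πL n) (hRb n) hsign habs ih c K

end Wealth

theorem product_iid_convex_order_general
    {Ω : Type*} [MeasureSpace Ω]
    (R : ℕ → Ω → ℝ)
    (hindep : iIndepFun R volume)
    (hident : ∀ i, IdentDistrib (R i) (R 0) volume volume)
    (hint : Integrable (R 0))
    (b : ℝ) (hb : b = ∫ ω, R 0 ω)
    (πM πL : ℝ) (hsign : 0 ≤ πM * πL) (habs : |πM| ≤ |πL|)
    (N : ℕ) :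
    (∫ ω, ∏ i ∈ Finset.range N, (1 + πM * (R i ω - b)))
        = (∫ ω, ∏ i ∈ Finset.range N, (1 + πL * (R i ω - b))) ∧
      ∀ K : ℝ,
        ∫ ω, max ((∏ i ∈ Finset.range N, (1 + πM * (R i ω - b))) - K) 0
          ≤ ∫ ω, max ((∏ i ∈ Finset.range N, (1 + πL * (R i ω - b))) - K) 0 := by
  have hRi : ∀ i, Integrable (R i) := fun i => (hident i).integrable_iff.mpr hint
  have hRb : ∀ i, ∫ ω, R i ω = b := fun i => hb ▸ (hident i).integral_eq
  refine ⟨(integral_wealth hindep hRi hRb πM N).trans (integral_wealth hindep hRi hRb πL N).symm,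
    fun K => ?_⟩
  simpa [wealth] using integral_posPart_wealth_le hindep hRi hRb hsign habs N 1 K

/-- **Convex order for products of i.i.d. centered returns (Proposition 1).**
Let `(R_i)` be i.i.d. integrable returns with mean `b`, and let `π_M, π_L` have the
same sign with `|π_M| ≤ |π_L|`.  Then the wealths
`X = ∏_{i<N} (1 + π_M (R_i − b))` and `Y = ∏_{i<N} (1 + π_L (R_i − b))`
satisfy `X ≤_C Y`: `E[X] = E[Y]` and `E[(X−K)⁺] ≤ E[(Y−K)⁺]` for all `K`. -/
theorem product_iid_convex_order
    {Ω : Type*} [MeasureSpace Ω] [IsProbabilityMeasure (volume : Measure Ω)]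
    (R : ℕ → Ω → ℝ)
    (hmeas : ∀ i, Measurable (R i))
    (hindep : iIndepFun R volume)
    (hident : ∀ i, IdentDistrib (R i) (R 0) volume volume)
    (hint : Integrable (R 0))
    (b : ℝ) (hb : b = ∫ ω, R 0 ω)
    (πM πL : ℝ) (hsign : 0 ≤ πM * πL) (habs : |πM| ≤ |πL|)
    (N : ℕ) :
    (∫ ω, ∏ i ∈ Finset.range N, (1 + πM * (R i ω - b)))
        = (∫ ω, ∏ i ∈ Finset.range N, (1 + πL * (R i ω - b))) ∧
      ∀ K : ℝ,
        ∫ ω, max ((∏ i ∈ Finset.range N, (1 + πM * (R i ω - b))) - K) 0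
          ≤ ∫ ω, max ((∏ i ∈ Finset.range N, (1 + πL * (R i ω - b))) - K) 0 :=
  product_iid_convex_order_general R hindep hident hint b hb πM πL hsign habs N
end

section
/- Let R be an integrable real random variable with mean b = E[R], and let π_M, π_L ∈ ℝ satisfy π_M·π_L ≥ 0 and |π_M| ≤ |π_L|. Then 1 + π_M(R − b) ≤_C 1 + π_L(R − b); that is, E[1 + π_M(R − b)] = E[1 + π_L(R − b)] = 1 and E[((1 + π_M(R − b)) − K)⁺] ≤ E[((1 + π_L(R − b)) − K)⁺] for every K ∈ ℝ. -/
open MeasureTheory Set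

/-- **Single-period convex order comparison.**
Let `R` be an integrable return with mean `b`, and let `π_M, π_L` have the same sign
with `|π_M| ≤ |π_L|`.  Then `1 + π_M (R − b) ≤_C 1 + π_L (R − b)`: both means equal `1`
and `E[((1 + π_M (R − b)) − K)⁺] ≤ E[((1 + π_L (R − b)) − K)⁺]` for all `K`. -/
theorem single_period_convex_order
    {Ω : Type*} [MeasureSpace Ω] [IsProbabilityMeasure (volume : Measure Ω)]
    (R : Ω → ℝ) (hint : Integrable R)
    (b : ℝ) (hb : b = ∫ ω, R ω)
    (πM πL : ℝ) (hsign : 0 ≤ πM * πL) (habs : |πM| ≤ |πL|) :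
    (∫ ω, (1 + πM * (R ω - b))) = 1 ∧
      (∫ ω, (1 + πL * (R ω - b))) = 1 ∧
      ∀ K : ℝ,
        ∫ ω, max ((1 + πM * (R ω - b)) - K) 0
          ≤ ∫ ω, max ((1 + πL * (R ω - b)) - K) 0 := by
  have hR : Integrable (fun ω => R ω - b) := hint.sub (integrable_const b)
  have hmean : ∫ ω, (R ω - b) = 0 := by
    rw [integral_sub hint (integrable_const b), integral_const]
    simp [hb]
  have key : ∀ π : ℝ, (∫ ω, (1 + π * (R ω - b))) = 1 := by
    intro π
    rw [integral_add (integrable_const 1) (hR.const_mul π), integral_const,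
      integral_const_mul, hmean]
    simp
  refine ⟨key πM, key πL, ?_⟩
  intro K
  by_cases hπL : πL = 0
  · have hπM : πM = 0 := by
      rw [hπL] at habs; simpa using abs_nonpos_iff.mp (by simpa using habs)
    simp [hπL, hπM]
  · -- set up t ∈ [0,1] with πM = t * πL
    set t := πM / πL with ht
    have hsq : 0 < πL * πL := mul_self_pos.mpr hπL
    have htnn : 0 ≤ t := by
      have h2 : t * (πL * πL) = πM * πL := by rw [ht]; field_simp [hπL]
      nlinarith
    have ht1 : t ≤ 1 := by
      have habs' : |t| ≤ 1 := by
        rw [ht, abs_div]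
        exact div_le_one_of_le₀ habs (abs_nonneg _)
      exact (le_abs_self t).trans habs'
    have hπM : πM = t * πL := by rw [ht, div_mul_cancel₀ _ hπL]
    -- integrability
    have hIM1 : Integrable (fun ω => 1 + πM * (R ω - b)) :=
      (integrable_const 1).add (hR.const_mul πM)
    have hIL1 : Integrable (fun ω => 1 + πL * (R ω - b)) :=
      (integrable_const 1).add (hR.const_mul πL)
    have hIM : Integrable (fun ω => (1 + πM * (R ω - b)) - K) :=
      hIM1.sub (integrable_const K)
    have hIL : Integrable (fun ω => (1 + πL * (R ω - b)) - K) :=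
      hIL1.sub (integrable_const K)
    have hIMp : Integrable (fun ω => max ((1 + πM * (R ω - b)) - K) 0) := hIM.pos_part
    have hILp : Integrable (fun ω => max ((1 + πL * (R ω - b)) - K) 0) := hIL.pos_part
    -- Jensen-type lower bound for the L side
    have hL0 : 0 ≤ ∫ ω, max ((1 + πL * (R ω - b)) - K) 0 :=
      integral_nonneg fun ω => le_max_right _ _
    have hL1 : 1 - K ≤ ∫ ω, max ((1 + πL * (R ω - b)) - K) 0 := by
      have : ∫ ω, ((1 + πL * (R ω - b)) - K) = 1 - K := by
        rw [integral_sub hIL1 (integrable_const K),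
          key πL, integral_const]
        simp
      calc 1 - K = ∫ ω, ((1 + πL * (R ω - b)) - K) := this.symm
        _ ≤ ∫ ω, max ((1 + πL * (R ω - b)) - K) 0 :=
          integral_mono hIL hILp fun ω => le_max_left _ _
    have hc : max (1 - K) 0 ≤ ∫ ω, max ((1 + πL * (R ω - b)) - K) 0 := max_le hL1 hL0
    -- pointwise convexity inequality
    have hptw : ∀ ω, max ((1 + πM * (R ω - b)) - K) 0 ≤
        t * max ((1 + πL * (R ω - b)) - K) 0 + (1 - t) * max (1 - K) 0 := by
      intro ω
      have ha := le_max_left ((1 + πL * (R ω - b)) - K) 0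
      have ha0 := le_max_right ((1 + πL * (R ω - b)) - K) 0
      have hb1 := le_max_left (1 - K) (0 : ℝ)
      have hb0 := le_max_right (1 - K) (0 : ℝ)
      apply max_le
      · rw [hπM]; nlinarith
      · nlinarith
    -- integrate
    calc ∫ ω, max ((1 + πM * (R ω - b)) - K) 0
        ≤ ∫ ω, (t * max ((1 + πL * (R ω - b)) - K) 0 + (1 - t) * max (1 - K) 0) :=
          integral_mono hIMp ((hILp.const_mul t).add (integrable_const _)) hptw
      _ = t * (∫ ω, max ((1 + πL * (R ω - b)) - K) 0) + (1 - t) * max (1 - K) 0 := by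
          rw [integral_add (hILp.const_mul t) (integrable_const _), integral_const_mul,
            integral_const]
          simp
      _ ≤ ∫ ω, max ((1 + πL * (R ω - b)) - K) 0 := by nlinarith
end

section
/- Let X, Y, Z be integrable real random variables on a probability space such that Z is independent of X and Z is independent of Y, and such that the products X·Z and Y·Z are integrable. If X ≤_C Y, i.e. E[X] = E[Y] and E[(X−K)⁺] ≤ E[(Y−K)⁺] for every K ∈ ℝ, then X·Z ≤_C Y·Z, i.e. E[X·Z] = E[Y·Z] and E[(X·Z−K)⁺] ≤ E[(Y·Z−K)⁺] for every K ∈ ℝ. -/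
open MeasureTheory ProbabilityTheory

/-! By independence the law of `(Z, X)` is the product of the laws, so by Fubini
`E[(XZ - K)⁺] = ∫ E[(Xz - K)⁺] dP_Z(z)`, and it suffices to compare `E[(Xz - K)⁺]` with
`E[(Yz - K)⁺]` for each fixed `z`. For `z > 0` this is `z` times a call at strike `K / z`; for
`z < 0` it is `-z` times a put, and put-call parity together with `E[X] = E[Y]` turns domination
of calls into domination of puts. -/

section ConvexOrder

variable {Ω : Type*} [MeasurableSpace Ω] {μ : Measure Ω} {X Y : Ω → ℝ}

theorem MeasureTheory.Integrable.max_sub_const_zero [IsFiniteMeasure μ] {f : Ω → ℝ}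
    (hf : Integrable f μ) (K : ℝ) : Integrable (fun ω => max (f ω - K) 0) μ :=
  (hf.sub (integrable_const K)).sup (integrable_const 0)

theorem integral_max_const_sub_le_of_calls [IsFiniteMeasure μ] (hX : Integrable X μ)
    (hY : Integrable Y μ) (hmean : ∫ ω, X ω ∂μ = ∫ ω, Y ω ∂μ)
    (hcalls : ∀ K : ℝ, ∫ ω, max (X ω - K) 0 ∂μ ≤ ∫ ω, max (Y ω - K) 0 ∂μ) (K : ℝ) :
    ∫ ω, max (K - X ω) 0 ∂μ ≤ ∫ ω, max (K - Y ω) 0 ∂μ := by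
  have hshift {V : Ω → ℝ} (hV : Integrable V μ) : Integrable (fun ω => V ω - K) μ :=
    hV.sub (integrable_const K)
  have hput (V : Ω → ℝ) : (fun ω => max (K - V ω) 0) = fun ω => max (V ω - K) 0 - (V ω - K) := by
    funext ω
    have parity := max_zero_sub_max_neg_zero_eq_self (V ω - K)
    rw [neg_sub] at parity
    linarith
  rw [hput, hput, integral_sub (hX.max_sub_const_zero K) (hshift hX),
    integral_sub (hY.max_sub_const_zero K) (hshift hY),
    integral_sub hX (integrable_const K), integral_sub hY (integrable_const K), hmean]
  linarith [hcalls K]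

theorem max_mul_sub_zero_of_pos {z : ℝ} (hz : 0 < z) (x K : ℝ) :
    max (x * z - K) 0 = z * max (x - K / z) 0 := by
  rw [mul_max_of_nonneg _ _ hz.le, mul_zero, mul_sub, mul_div_cancel₀ _ hz.ne', mul_comm]

theorem max_mul_sub_zero_of_neg {z : ℝ} (hz : z < 0) (x K : ℝ) :
    max (x * z - K) 0 = -z * max (K / z - x) 0 := by
  have hfactor : x * z - K = -z * (K / z - x) := by field_simp [hz.ne]; ring
  rw [hfactor, mul_max_of_nonneg _ _ (neg_nonneg.2 hz.le), mul_zero]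

theorem integral_max_mul_sub_le_of_calls [IsFiniteMeasure μ] (hX : Integrable X μ)
    (hY : Integrable Y μ) (hmean : ∫ ω, X ω ∂μ = ∫ ω, Y ω ∂μ)
    (hcalls : ∀ K : ℝ, ∫ ω, max (X ω - K) 0 ∂μ ≤ ∫ ω, max (Y ω - K) 0 ∂μ) (z K : ℝ) :
    ∫ ω, max (X ω * z - K) 0 ∂μ ≤ ∫ ω, max (Y ω * z - K) 0 ∂μ := by
  rcases lt_trichotomy z 0 with hz | rfl | hz
  · simp_rw [max_mul_sub_zero_of_neg hz, integral_const_mul]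
    exact mul_le_mul_of_nonneg_left
      (integral_max_const_sub_le_of_calls hX hY hmean hcalls _) (neg_nonneg.2 hz.le)
  · simp
  · simp_rw [max_mul_sub_zero_of_pos hz, integral_const_mul]
    exact mul_le_mul_of_nonneg_left (hcalls _) hz.le

end ConvexOrder

namespace ProbabilityTheory

variable {Ω α β : Type*} [MeasurableSpace Ω] [MeasurableSpace α] [MeasurableSpace β]
  {μ : Measure Ω} [IsFiniteMeasure μ] {Z : Ω → α} {W : Ω → β} {g : α × β → ℝ}

theorem IndepFun.integrable_map_prod (hZW : IndepFun Z W μ) (hZ : AEMeasurable Z μ)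
    (hW : AEMeasurable W μ) (hg : StronglyMeasurable g)
    (hint : Integrable (fun ω => g (Z ω, W ω)) μ) :
    Integrable g ((μ.map Z).prod (μ.map W)) := by
  rw [← hZW.map_prod_eq_prod_map_map hZ hW]
  exact (integrable_map_measure hg.aestronglyMeasurable (hZ.prodMk hW)).2 hint

theorem IndepFun.integral_comp_eq_integral_integral_s12 (hZW : IndepFun Z W μ)
    (hZ : AEMeasurable Z μ) (hW : AEMeasurable W μ) (hg : StronglyMeasurable g)
    (hint : Integrable (fun ω => g (Z ω, W ω)) μ) :
    ∫ ω, g (Z ω, W ω) ∂μ = ∫ a, ∫ b, g (a, b) ∂(μ.map W) ∂(μ.map Z) := by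
  rw [← integral_map (hZ.prodMk hW) hg.aestronglyMeasurable, hZW.map_prod_eq_prod_map_map hZ hW,
    integral_prod g (hZW.integrable_map_prod hZ hW hg hint)]

theorem IndepFun.integral_comp_le {W' : Ω → β} (hZW : IndepFun Z W μ) (hZW' : IndepFun Z W' μ)
    (hZ : AEMeasurable Z μ) (hW : AEMeasurable W μ) (hW' : AEMeasurable W' μ)
    (hg : StronglyMeasurable g) (hint : Integrable (fun ω => g (Z ω, W ω)) μ)
    (hint' : Integrable (fun ω => g (Z ω, W' ω)) μ)
    (hle : ∀ a, ∫ ω, g (a, W ω) ∂μ ≤ ∫ ω, g (a, W' ω) ∂μ) :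
    ∫ ω, g (Z ω, W ω) ∂μ ≤ ∫ ω, g (Z ω, W' ω) ∂μ := by
  rw [hZW.integral_comp_eq_integral_integral_s12 hZ hW hg hint,
    hZW'.integral_comp_eq_integral_integral_s12 hZ hW' hg hint']
  refine integral_mono (hZW.integrable_map_prod hZ hW hg hint).integral_prod_left
    (hZW'.integrable_map_prod hZ hW' hg hint').integral_prod_left fun a => ?_
  have hga : StronglyMeasurable fun b => g (a, b) := hg.comp_measurable measurable_prodMk_left
  rw [integral_map hW hga.aestronglyMeasurable, integral_map hW' hga.aestronglyMeasurable]
  exact hle a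

end ProbabilityTheory

/-- **The convex order is preserved by multiplication with an independent factor
(Lemma A.2).**  If `X ≤_C Y` and `Z` is independent of `X` and of `Y`, with all
relevant products integrable, then `X·Z ≤_C Y·Z`. -/
theorem convex_order_mul_indep
    {Ω : Type*} [MeasureSpace Ω] [IsProbabilityMeasure (volume : Measure Ω)]
    (X Y Z : Ω → ℝ)
    (hX : Integrable X) (hY : Integrable Y) (hZ : Integrable Z)
    (hXZindep : IndepFun Z X) (hYZindep : IndepFun Z Y)
    (hXZint : Integrable (fun ω => X ω * Z ω))
    (hYZint : Integrable (fun ω => Y ω * Z ω))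
    (hmean : (∫ ω, X ω) = ∫ ω, Y ω)
    (hcalls : ∀ K : ℝ, ∫ ω, max (X ω - K) 0 ≤ ∫ ω, max (Y ω - K) 0) :
    (∫ ω, X ω * Z ω) = (∫ ω, Y ω * Z ω) ∧
      ∀ K : ℝ, ∫ ω, max (X ω * Z ω - K) 0 ≤ ∫ ω, max (Y ω * Z ω - K) 0 := by
  refine ⟨?_, fun K => ?_⟩
  · simp_rw [mul_comm (X _), mul_comm (Y _)]
    rw [hXZindep.integral_fun_mul_eq_mul_integral hZ.aestronglyMeasurable
        hX.aestronglyMeasurable,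
      hYZindep.integral_fun_mul_eq_mul_integral hZ.aestronglyMeasurable
        hY.aestronglyMeasurable, hmean]
  · have hg : Continuous fun p : ℝ × ℝ => max (p.2 * p.1 - K) 0 := by fun_prop
    exact hXZindep.integral_comp_le hYZindep hZ.aemeasurable hX.aemeasurable hY.aemeasurable
      hg.stronglyMeasurable (hXZint.max_sub_const_zero K) (hYZint.max_sub_const_zero K)
      fun z => integral_max_mul_sub_le_of_calls hX hY hmean hcalls z K
end

section
/- Let (Ω, F, P) be a probability space, let D be an a.s. strictly positive integrable random variable with E[D] = 1, and let γ_M ≥ γ_L > 0. Let X_M and X_L be integrable real-valued random variables such that for some constants c_M, c_L > 0, exp(−γ_M X_M) = c_M·D and exp(−γ_L X_L) = c_L·D almost surely (the first-order conditions for exponential utilities U_M(x) = −e^{−γ_M x} and U_L(x) = −e^{−γ_L x}), and suppose D·X_M and D·X_L are integrable with E[D·X_M] = E[D·X_L]. Then E[X_M] ≤ E[X_L], E[(X_M−K)⁺] ≤ E[(X_L−K)⁺] for every K ∈ ℝ, and moreover E[((X_M − E[X_M]) − K)⁺] ≤ E[((X_L − E[X_L]) − K)⁺] for every K ∈ ℝ;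 that is, X_M ≤_MC X_L and X_M − E[X_M] ≤_C X_L − E[X_L]. -/
open MeasureTheory Set

lemma call_helper {Ω : Type*} [MeasureSpace Ω] [IsProbabilityMeasure (volume : Measure Ω)]
    (Y Z : Ω → ℝ) (hY : Integrable Y) (hZ : Integrable Z)
    (l b : ℝ) (hl0 : 0 ≤ l) (hl1 : l ≤ 1) (hb : b ≤ ∫ ω, Y ω)
    (hZY : ∀ᵐ ω, Z ω = l * Y ω + (1 - l) * b) (K : ℝ) :
    ∫ ω, max (Z ω - K) 0 ≤ ∫ ω, max (Y ω - K) 0 := by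
  have hgint : Integrable (fun ω => max (Y ω - K) 0) :=
    (hY.sub (integrable_const K)).pos_part
  have hzint : Integrable (fun ω => max (Z ω - K) 0) :=
    (hZ.sub (integrable_const K)).pos_part
  set g := fun ω => max (Y ω - K) 0 with hg
  have IY : (0:ℝ) ≤ ∫ ω, g ω := integral_nonneg fun ω => le_max_right _ _
  have IK : (∫ ω, Y ω) - K ≤ ∫ ω, g ω := by
    have h1 : ∫ ω, (Y ω - K) = (∫ ω, Y ω) - K := by
      rw [integral_sub hY (integrable_const K), integral_const]
      simp
    calc (∫ ω, Y ω) - K = ∫ ω, (Y ω - K) := h1.symm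
      _ ≤ ∫ ω, g ω :=
        integral_mono (hY.sub (integrable_const K)) hgint fun ω => le_max_left _ _
  have hbK : max (b - K) 0 ≤ ∫ ω, g ω := max_le (by linarith) IY
  have hpt : ∀ᵐ ω, max (Z ω - K) 0 ≤ l * g ω + (1 - l) * max (b - K) 0 := by
    filter_upwards [hZY] with ω hω
    have h1 : Z ω - K = l * (Y ω - K) + (1 - l) * (b - K) := by rw [hω]; ring
    have h2 : l * (Y ω - K) ≤ l * g ω :=
      mul_le_mul_of_nonneg_left (le_max_left _ _) hl0
    have h3 : (1 - l) * (b - K) ≤ (1 - l) * max (b - K) 0 :=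
      mul_le_mul_of_nonneg_left (le_max_left _ _) (by linarith)
    have h4 : (0:ℝ) ≤ l * g ω + (1 - l) * max (b - K) 0 := by
      have := le_max_right (Y ω - K) 0
      have := le_max_right (b - K) 0
      nlinarith
    exact max_le (by linarith) h4
  have hRint : Integrable (fun ω => l * g ω + (1 - l) * max (b - K) 0) :=
    (hgint.const_mul l).add (integrable_const _)
  calc ∫ ω, max (Z ω - K) 0 ≤ ∫ ω, (l * g ω + (1 - l) * max (b - K) 0) :=
        integral_mono_ae hzint hRint hpt
    _ = l * (∫ ω, g ω) + (1 - l) * max (b - K) 0 := by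
        rw [integral_add (hgint.const_mul l) (integrable_const _),
          integral_const_mul, integral_const]
        simp
    _ ≤ l * (∫ ω, g ω) + (1 - l) * (∫ ω, g ω) := by
        have : (1 - l) * max (b - K) 0 ≤ (1 - l) * (∫ ω, g ω) :=
          mul_le_mul_of_nonneg_left hbK (by linarith)
        linarith
    _ = ∫ ω, g ω := by ring


/-- **Stochastic dominance for exponential utility maximizers.**
Let `D` be an a.s. strictly positive integrable density with `E[D] = 1`, let
`γ_M ≥ γ_L > 0`, and let the integrable payoffs `X_M, X_L` satisfy the exponential
first-order conditions `exp(−γ_M X_M) = c_M·D` and `exp(−γ_L X_L) = c_L·D` a.s. for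
some constants `c_M, c_L > 0`, with equal budgets `E[D·X_M] = E[D·X_L]`.  Then
`E[X_M] ≤ E[X_L]`, `X_M ≤_MC X_L`, and `X_M − E[X_M] ≤_C X_L − E[X_L]`. -/
theorem exponential_utility_stochastic_dominance
    {Ω : Type*} [MeasureSpace Ω] [IsProbabilityMeasure (volume : Measure Ω)]
    (D : Ω → ℝ) (hDpos : ∀ᵐ ω, 0 < D ω) (hDint : Integrable D)
    (hDmean : (∫ ω, D ω) = 1)
    (γM γL : ℝ) (hγL : 0 < γL) (hγ : γL ≤ γM)
    (XM XL : Ω → ℝ) (hXMint : Integrable XM) (hXLint : Integrable XL)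
    (cM cL : ℝ) (hcM : 0 < cM) (hcL : 0 < cL)
    (hfocM : ∀ᵐ ω, Real.exp (-γM * XM ω) = cM * D ω)
    (hfocL : ∀ᵐ ω, Real.exp (-γL * XL ω) = cL * D ω)
    (hDXMint : Integrable (fun ω => D ω * XM ω))
    (hDXLint : Integrable (fun ω => D ω * XL ω))
    (hbudget : (∫ ω, D ω * XM ω) = ∫ ω, D ω * XL ω) :
    (∫ ω, XM ω) ≤ (∫ ω, XL ω) ∧
      (∀ K : ℝ, ∫ ω, max (XM ω - K) 0 ≤ ∫ ω, max (XL ω - K) 0) ∧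
      (∀ K : ℝ, ∫ ω, max ((XM ω - ∫ ω', XM ω') - K) 0
        ≤ ∫ ω, max ((XL ω - ∫ ω', XL ω') - K) 0) := by
  have hγM : 0 < γM := lt_of_lt_of_le hγL hγ
  set l : ℝ := γL / γM with hl
  have hl0 : 0 < l := div_pos hγL hγM
  have hl1 : l ≤ 1 := (div_le_one hγM).2 hγ
  set c : ℝ := (Real.log cL - Real.log cM) / γM with hc
  -- the two log-identities
  have hlogM : ∀ᵐ ω, -γM * XM ω = Real.log cM + Real.log (D ω) := by
    filter_upwards [hfocM, hDpos] with ω h hD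
    rw [← Real.log_exp (-γM * XM ω), h, Real.log_mul hcM.ne' hD.ne']
  have hlogL : ∀ᵐ ω, -γL * XL ω = Real.log cL + Real.log (D ω) := by
    filter_upwards [hfocL, hDpos] with ω h hD
    rw [← Real.log_exp (-γL * XL ω), h, Real.log_mul hcL.ne' hD.ne']
  -- affine relation
  have hrel : ∀ᵐ ω, XM ω = l * XL ω + c := by
    filter_upwards [hlogM, hlogL] with ω e1 e2
    rw [hl, hc]
    field_simp
    nlinarith [e1, e2]
  -- budget: c = (1 - l) * m
  set m : ℝ := ∫ ω, D ω * XL ω with hm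
  have hbud2 : (∫ ω, D ω * XM ω) = l * m + c := by
    have h1 : (∫ ω, D ω * XM ω) = ∫ ω, (l * (D ω * XL ω) + c * D ω) := by
      apply integral_congr_ae
      filter_upwards [hrel] with ω hω
      simp only [hω]; ring
    rw [h1, integral_add (hDXLint.const_mul l) (hDint.const_mul c),
      integral_const_mul, integral_const_mul, hDmean]
    ring
  have hceq : c = (1 - l) * m := by
    have := hbudget
    rw [hbud2] at this
    linarith
  have hrel' : ∀ᵐ ω, XM ω = l * XL ω + (1 - l) * m := by
    filter_upwards [hrel] with ω hω; rw [hω, hceq]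
  -- m ≤ ∫ XL
  set t : ℝ := -(Real.log cL) / γL with ht
  have hptneg : ∀ᵐ ω, (D ω - 1) * (XL ω - t) ≤ 0 := by
    filter_upwards [hlogL, hDpos] with ω e2 hD
    have hXt : XL ω - t = -(Real.log (D ω)) / γL := by
      rw [ht]; field_simp; linarith
    rw [hXt]
    rcases le_or_gt 1 (D ω) with h1 | h1
    · have hlog : 0 ≤ Real.log (D ω) := Real.log_nonneg h1
      have h2 : -(Real.log (D ω)) / γL ≤ 0 :=
        div_nonpos_of_nonpos_of_nonneg (by linarith) hγL.le
      nlinarith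
    · have hlog : Real.log (D ω) ≤ 0 := Real.log_nonpos hD.le h1.le
      have h2 : 0 ≤ -(Real.log (D ω)) / γL := div_nonneg (by linarith) hγL.le
      nlinarith
  have hintneg : (∫ ω, (D ω - 1) * (XL ω - t)) ≤ 0 := integral_nonpos_of_ae hptneg
  have hexp : (∫ ω, (D ω - 1) * (XL ω - t)) = m - ∫ ω, XL ω := by
    have h1 : (∫ ω, (D ω - 1) * (XL ω - t))
        = ∫ ω, ((D ω * XL ω - XL ω - t * D ω) + t) := by
      apply integral_congr_ae
      filter_upwards with ω; ring
    have i1 : Integrable (fun ω => D ω * XL ω - XL ω) := hDXLint.sub hXLint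
    have i2 : Integrable (fun ω => D ω * XL ω - XL ω - t * D ω) :=
      i1.sub (hDint.const_mul t)
    rw [h1, integral_add i2 (integrable_const t),
      integral_sub i1 (hDint.const_mul t),
      integral_sub hDXLint hXLint, integral_const_mul, hDmean, integral_const]
    simp [hm]
  have hmle : m ≤ ∫ ω, XL ω := by rw [hexp] at hintneg; linarith
  -- ∫ XM = l * ∫ XL + (1-l) * m
  have hEXM : (∫ ω, XM ω) = l * (∫ ω, XL ω) + (1 - l) * m := by
    have h1 : (∫ ω, XM ω) = ∫ ω, (l * XL ω + (1 - l) * m) :=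
      integral_congr_ae hrel'
    rw [h1, integral_add (hXLint.const_mul l) (integrable_const _),
      integral_const_mul, integral_const]
    simp
  have part1 : (∫ ω, XM ω) ≤ ∫ ω, XL ω := by
    rw [hEXM]
    nlinarith [mul_le_mul_of_nonneg_left hmle (by linarith : (0:ℝ) ≤ 1 - l)]
  refine ⟨part1, ?_, ?_⟩
  · intro K
    exact call_helper XL XM hXLint hXMint l m hl0.le hl1 hmle hrel' K
  · intro K
    have hYint : Integrable (fun ω => XL ω - ∫ ω', XL ω') :=
      hXLint.sub (integrable_const _)
    have hZint : Integrable (fun ω => XM ω - ∫ ω', XM ω') :=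
      hXMint.sub (integrable_const _)
    have hbY : (0:ℝ) ≤ ∫ ω, (XL ω - ∫ ω', XL ω') := by
      rw [integral_sub hXLint (integrable_const _), integral_const]
      simp
    have hZY : ∀ᵐ ω, (XM ω - ∫ ω', XM ω')
        = l * (XL ω - ∫ ω', XL ω') + (1 - l) * 0 := by
      filter_upwards [hrel'] with ω hω
      rw [hEXM, hω]; ring
    exact call_helper _ _ hYint hZint l 0 hl0.le hl1 hbY hZY K
end
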